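/- arXiv:2503.06870 — 7 statements merged into one kernel-verified Lean document; each statement's English description precedes it below -/
import Mathlib

section
/- For all integers n ≥ 1 and p, q ≥ 0 with 1 ≤ p + q ≤ n, the quantity Υ_{p,q} := ((p+q)(n+1) − 2pq) / (2 + 4·min(p, q, √(pq)/2)) satisfies Υ_{p,q} ≥ n/2. -/
set_option maxHeartbeats 1000000


/-- For `1 ≤ p + q ≤ n`, the constant
`Υ_{p,q} = ((p+q)(n+1) − 2pq)/(2 + 4 min(p, q, √(pq)/2))` satisfies `Υ_{p,q} ≥ n/2`. -/
theorem upsilon_ge_half_n (n p q : ℕ) (hn : 1 ≤ n) (hpq1 : 1 ≤ p + q) (hpq2 : p + q ≤ n) :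
    (n : ℝ) / 2 ≤
      (((p : ℝ) + q) * ((n : ℝ) + 1) - 2 * p * q) /
        (2 + 4 * min (min (p : ℝ) (q : ℝ)) (Real.sqrt ((p : ℝ) * q) / 2)) := by
  set s : ℝ := Real.sqrt ((p : ℝ) * q) with hs_def
  have hp0 : (0:ℝ) ≤ p := Nat.cast_nonneg p
  have hq0 : (0:ℝ) ≤ q := Nat.cast_nonneg q
  have hs0 : 0 ≤ s := Real.sqrt_nonneg _
  have hs2 : s ^ 2 = (p : ℝ) * q := Real.sq_sqrt (by positivity)
  have hAM : 2 * s ≤ (p : ℝ) + q := by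
    nlinarith [sq_nonneg ((p:ℝ) - q), sq_nonneg ((p:ℝ) + q - 2*s)]
  have hn' : ((p:ℝ) + q) ≤ n := by exact_mod_cast hpq2
  have hn1 : (1:ℝ) ≤ n := by exact_mod_cast hn
  have hpq1' : (1:ℝ) ≤ (p:ℝ) + q := by
    have := hpq1; push_cast [← Nat.cast_add]; exact_mod_cast hpq1
  have hm0 : 0 ≤ min (min (p : ℝ) (q : ℝ)) (s / 2) := by
    apply le_min (le_min hp0 hq0) (by positivity)
  have hD : (0:ℝ) < 2 + 4 * min (min (p : ℝ) (q : ℝ)) (s / 2) := by linarith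
  rw [div_le_div_iff₀ (by norm_num) hD]
  rcases le_total (min (p:ℝ) (q:ℝ)) (s / 2) with hmin | hmin
  · rw [min_eq_left hmin]
    rcases le_total (p:ℝ) (q:ℝ) with hpq | hpq
    · rw [min_eq_left hpq] at hmin ⊢
      -- p ≤ s/2, so pq ≥ 4p²
      have h4 : 4 * (p:ℝ)^2 ≤ (p:ℝ) * q := by nlinarith
      rcases Nat.eq_zero_or_pos p with hp | hp
      · have hpr : (p:ℝ) = 0 := by rw [hp]; norm_num
        nlinarith
      · have hp1 : (1:ℝ) ≤ p := by exact_mod_cast hp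
        have hq4 : 4 * (p:ℝ) ≤ q := by nlinarith
        nlinarith [mul_nonneg (sub_nonneg.mpr hn') (show (0:ℝ) ≤ q - p - 1 by nlinarith)]
    · rw [min_eq_right hpq] at hmin ⊢
      have h4 : 4 * (q:ℝ)^2 ≤ (p:ℝ) * q := by nlinarith
      rcases Nat.eq_zero_or_pos q with hq | hq
      · have hqr : (q:ℝ) = 0 := by rw [hq]; norm_num
        nlinarith
      · have hq1 : (1:ℝ) ≤ q := by exact_mod_cast hq
        have hp4 : 4 * (q:ℝ) ≤ p := by nlinarith
        nlinarith [mul_nonneg (sub_nonneg.mpr hn') (show (0:ℝ) ≤ p - q - 1 by nlinarith)]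
  · rw [min_eq_right hmin]
    rcases Nat.eq_zero_or_pos (p * q) with hpq | hpq
    · have hpq' : (p:ℝ) * q = 0 := by exact_mod_cast hpq
      have : s = 0 := by rw [hs_def, hpq', Real.sqrt_zero]
      rw [this]
      nlinarith
    · have hpq' : (1:ℝ) ≤ (p:ℝ) * q := by exact_mod_cast hpq
      have hs1 : 1 ≤ s := by nlinarith
      nlinarith [mul_nonneg (sub_nonneg.mpr hn') (show (0:ℝ) ≤ (p:ℝ) + q - s - 1 by nlinarith),
        mul_nonneg (sub_nonneg.mpr hAM) (show (0:ℝ) ≤ (p:ℝ) + q + s by linarith)]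
end

section
/- For all integers n ≥ 1 and p, q ≥ 0 with 1 ≤ p + q ≤ n, the inequality n(p + q − 2 min(p, q, √(pq)/2) − 1) + p + q − 2pq ≥ 0 holds. -/
lemma upsilon_key_aux (n p q : ℕ) (hn : 1 ≤ n) (hpq1 : 1 ≤ p + q) (hpq2 : p + q ≤ n)
    (hle : p ≤ q) :
    0 ≤ (n : ℝ) * ((p : ℝ) + q - 2 * min (min (p : ℝ) (q : ℝ)) (Real.sqrt ((p : ℝ) * q) / 2) - 1)
        + (p : ℝ) + q - 2 * p * q := by
  have hleR : (p : ℝ) ≤ q := by exact_mod_cast hle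
  have hnR : (p : ℝ) + q ≤ n := by exact_mod_cast hpq2
  rw [min_eq_left hleR]
  rcases Nat.eq_zero_or_pos p with hp | hp
  · subst hp
    have hq : 1 ≤ q := by omega
    have hqR : (1 : ℝ) ≤ q := by exact_mod_cast hq
    simp only [Nat.cast_zero, zero_mul, Real.sqrt_zero]
    rw [min_eq_left (by norm_num)]
    have h1 : (1:ℝ) ≤ n := by exact_mod_cast hn
    nlinarith
  · have hpR : (1 : ℝ) ≤ p := by exact_mod_cast hp
    have hqR : (1 : ℝ) ≤ q := by linarith
    set g := Real.sqrt ((p : ℝ) * q) with hg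
    have hg0 : 0 ≤ g := Real.sqrt_nonneg _
    have hg2 : g ^ 2 = (p : ℝ) * q := Real.sq_sqrt (by positivity)
    have hgle : g ≤ ((p : ℝ) + q) / 2 := by
      nlinarith [sq_nonneg ((p:ℝ) - q), sq_nonneg (g - ((p:ℝ)+q)/2)]
    rcases le_total ((p : ℝ)) (g / 2) with h | h
    · rw [min_eq_left h]
      -- 2p ≤ g so 4p² ≤ pq, so 4p ≤ q
      have h4 : 4 * (p : ℝ) ≤ q := by nlinarith
      nlinarith [mul_le_mul_of_nonneg_right hnR (by linarith : (0:ℝ) ≤ q - p - 1)]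
    · rw [min_eq_right h]
      have hcoef : (0:ℝ) ≤ (p:ℝ) + q - g - 1 := by linarith
      nlinarith [mul_le_mul_of_nonneg_right hnR hcoef, sq_nonneg ((p:ℝ)+q-2*g)]

/-- For integers `n ≥ 1`, `p, q ≥ 0` with `1 ≤ p + q ≤ n`, one has
`n(p + q − 2 min(p, q, √(pq)/2) − 1) + p + q − 2pq ≥ 0`. -/
theorem upsilon_key_inequality (n p q : ℕ) (hn : 1 ≤ n) (hpq1 : 1 ≤ p + q) (hpq2 : p + q ≤ n) :
    0 ≤ (n : ℝ) * ((p : ℝ) + q - 2 * min (min (p : ℝ) (q : ℝ)) (Real.sqrt ((p : ℝ) * q) / 2) - 1)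
        + (p : ℝ) + q - 2 * p * q := by
  rcases le_total p q with h | h
  · exact upsilon_key_aux n p q hn hpq1 hpq2 h
  · have := upsilon_key_aux n q p hn (by omega) (by omega) h
    rw [min_comm ((q:ℝ)) ((p:ℝ)), mul_comm ((q:ℝ)) ((p:ℝ))] at this
    linarith
end

section
/- Let σ₁ ≤ σ₂ ≤ … ≤ σ_N be real numbers, let Υ ∈ [1, N) be real, let w₁,…,w_N ≥ 0 be weights with Σ_α w_α = W and w_α ≤ W/Υ for all α, and suppose σ₁ + … + σ_{⌊Υ⌋} + (Υ − ⌊Υ⌋)σ_{⌊Υ⌋+1} ≥ κΥ for some κ ≤ 0. Then Σ_α σ_α w_α ≥ κ W. -/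
open Finset

/-- The weight principle: if `σ₀ ≤ … ≤ σ_{N-1}`, `Υ ∈ [1, N)`, the weights `w_α ≥ 0`
satisfy `w_α ≤ W/Υ` where `W = Σ w_α`, and the `Υ` smallest eigenvalues satisfy
`σ₀ + … + σ_{⌊Υ⌋-1} + (Υ − ⌊Υ⌋) σ_{⌊Υ⌋} ≥ κΥ` with `κ ≤ 0`, then `Σ σ_α w_α ≥ κ W`. -/
theorem weight_principle (N : ℕ) (σ w : ℕ → ℝ) (Υ κ : ℝ)
    (hmono : ∀ i j, i ≤ j → j < N → σ i ≤ σ j)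
    (hΥ1 : 1 ≤ Υ) (hΥN : Υ < N) (hκ : κ ≤ 0)
    (hw0 : ∀ i, i < N → 0 ≤ w i)
    (hwb : ∀ i, i < N → w i ≤ (∑ j ∈ range N, w j) / Υ)
    (hσ : κ * Υ ≤ ∑ i ∈ range ⌊Υ⌋₊, σ i + (Υ - ⌊Υ⌋₊) * σ ⌊Υ⌋₊) :
    κ * (∑ i ∈ range N, w i) ≤ ∑ i ∈ range N, σ i * w i := by
  set W := ∑ j ∈ range N, w j with hW
  have hΥ0 : (0:ℝ) < Υ := lt_of_lt_of_le one_pos hΥ1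
  set m := ⌊Υ⌋₊ with hm
  have hmΥ : (m:ℝ) ≤ Υ := Nat.floor_le hΥ0.le
  have hmN : m < N := by exact_mod_cast lt_of_le_of_lt hmΥ hΥN
  have hθ0 : 0 ≤ Υ - m := sub_nonneg.2 hmΥ
  have hW0 : 0 ≤ W := Finset.sum_nonneg fun i hi => hw0 i (mem_range.1 hi)
  set c := W / Υ with hc
  have hc0 : 0 ≤ c := div_nonneg hW0 hΥ0.le
  have hΥc : Υ * c = W := by
    rw [hc]; field_simp
  set u : ℕ → ℝ := fun i => if i < m then c else if i = m then (Υ - m) * c else 0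
    with hu
  have hsum_trunc : ∀ f : ℕ → ℝ,
      ∑ i ∈ range N, f i * u i = ∑ i ∈ range m, f i * c + f m * ((Υ - m) * c) := by
    intro f
    have hsub : range (m+1) ⊆ range N := range_subset_range.2 hmN
    have h1 : ∑ i ∈ range (m+1), f i * u i = ∑ i ∈ range N, f i * u i := by
      apply Finset.sum_subset hsub
      intro x hx hx'
      have hxm : ¬ x < m + 1 := by simpa using hx'
      have h2 : ¬ x < m := fun h => hxm (Nat.lt_succ_of_lt h)
      have h3 : x ≠ m := fun h => hxm (h ▸ Nat.lt_succ_self m)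
      simp [hu, h2, h3]
    rw [← h1, Finset.sum_range_succ]
    congr 1
    · apply Finset.sum_congr rfl
      intro i hi
      have : i < m := mem_range.1 hi
      simp [hu, this]
    · simp [hu]
  have hsumu : ∑ i ∈ range N, u i = W := by
    have := hsum_trunc (fun _ => 1)
    simp only [one_mul] at this
    rw [this, Finset.sum_const, Finset.card_range, nsmul_eq_mul]
    rw [← hΥc]; ring
  have hkey : ∀ i ∈ range N, σ m * (w i - u i) ≤ σ i * (w i - u i) := by
    intro i hi
    have hiN : i < N := mem_range.1 hi
    rcases lt_trichotomy i m with h | h | h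
    · have hσi : σ i ≤ σ m := hmono i m h.le hmN
      have hwu : w i - u i ≤ 0 := by
        have := hwb i hiN
        simp only [hu, if_pos h]
        simpa [hc] using sub_nonpos.2 this
      exact mul_le_mul_of_nonpos_right hσi hwu
    · rw [h]
    · have hσi : σ m ≤ σ i := hmono m i h.le hiN
      have hwu : 0 ≤ w i - u i := by
        have h2 : ¬ i < m := not_lt.2 h.le
        have h3 : i ≠ m := h.ne'
        simp only [hu, if_neg h2, if_neg h3, sub_zero]
        exact hw0 i hiN
      exact mul_le_mul_of_nonneg_right hσi hwu
  have hmain : ∑ i ∈ range N, σ i * u i ≤ ∑ i ∈ range N, σ i * w i := by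
    have h0 : (0:ℝ) ≤ ∑ i ∈ range N, σ i * (w i - u i) := by
      calc (0:ℝ) = ∑ i ∈ range N, σ m * (w i - u i) := by
            rw [← Finset.mul_sum, Finset.sum_sub_distrib, hsumu, sub_self, mul_zero]
        _ ≤ _ := Finset.sum_le_sum hkey
    have := Finset.sum_sub_distrib (f := fun i => σ i * w i)
      (g := fun i => σ i * u i) (s := range N)
    simp only [mul_sub] at h0
    linarith [h0, this]
  calc κ * W = (κ * Υ) * c := by rw [← hΥc]; ring
    _ ≤ (∑ i ∈ range m, σ i + (Υ - m) * σ m) * c := mul_le_mul_of_nonneg_right hσ hc0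
    _ = ∑ i ∈ range N, σ i * u i := by
        rw [hsum_trunc σ, add_mul, Finset.sum_mul]; ring
    _ ≤ ∑ i ∈ range N, σ i * w i := hmain
end

section
/- Let σ₁ ≤ … ≤ σ_N be real numbers satisfying σ₁ + … + σ_{⌊Υ⌋} + (Υ − ⌊Υ⌋)σ_{⌊Υ⌋+1} > 0 for some real Υ ∈ [1, N), and let w₁,…,w_N ≥ 0 be weights, not all zero, with w_α ≤ (1/Υ)Σ_β w_β for all α. Then Σ_α σ_α w_α > 0. -/
open Finset

/-- Strict weight principle: if `σ₀ ≤ … ≤ σ_{N-1}`, `Υ ∈ [1, N)`, the weights `w_α ≥ 0`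
are not all zero and satisfy `w_α ≤ (1/Υ) Σ w_β`, and
`σ₀ + … + σ_{⌊Υ⌋-1} + (Υ − ⌊Υ⌋) σ_{⌊Υ⌋} > 0`, then `Σ σ_α w_α > 0`. -/
theorem weight_principle_strict (N : ℕ) (σ w : ℕ → ℝ) (Υ : ℝ)
    (hmono : ∀ i j, i ≤ j → j < N → σ i ≤ σ j)
    (hΥ1 : 1 ≤ Υ) (hΥN : Υ < N)
    (hw0 : ∀ i, i < N → 0 ≤ w i)
    (hwpos : 0 < ∑ j ∈ range N, w j)
    (hwb : ∀ i, i < N → w i ≤ (1 / Υ) * ∑ j ∈ range N, w j)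
    (hσ : 0 < ∑ i ∈ range ⌊Υ⌋₊, σ i + (Υ - ⌊Υ⌋₊) * σ ⌊Υ⌋₊) :
    0 < ∑ i ∈ range N, σ i * w i := by
  set k := ⌊Υ⌋₊ with hk
  have hΥpos : (0:ℝ) < Υ := lt_of_lt_of_le one_pos hΥ1
  have hkΥ : (k:ℝ) ≤ Υ := Nat.floor_le hΥpos.le
  have hkN : k < N := by exact_mod_cast hkΥ.trans_lt hΥN
  set W := ∑ j ∈ range N, w j with hW
  set c := σ k with hc
  have hWΥ : 0 < W / Υ := div_pos hwpos hΥpos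
  have key : ∀ i ∈ range N,
      (if i < k then (σ i - c) * (W / Υ) else 0) ≤ (σ i - c) * w i := by
    intro i hi
    rw [mem_range] at hi
    by_cases h : i < k
    · simp only [h, if_true]
      have hσi : σ i - c ≤ 0 := sub_nonpos.mpr (hmono i k h.le hkN)
      have hwi : w i ≤ W / Υ := by
        have := hwb i hi
        rwa [one_div, inv_mul_eq_div] at this
      exact mul_le_mul_of_nonpos_left hwi hσi
    · simp only [h, if_false]
      exact mul_nonneg (sub_nonneg.mpr (hmono k i (not_lt.mp h) hi)) (hw0 i hi)
  have hsum : (∑ i ∈ range N, if i < k then (σ i - c) * (W / Υ) else 0)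
      ≤ ∑ i ∈ range N, (σ i - c) * w i := Finset.sum_le_sum key
  have hleft : (∑ i ∈ range N, if i < k then (σ i - c) * (W / Υ) else 0)
      = (∑ i ∈ range k, (σ i - c)) * (W / Υ) := by
    rw [Finset.sum_mul, ← Finset.sum_subset (Finset.range_subset_range.mpr hkN.le)
      (fun i _ hi => by simp [Finset.mem_range.not.mp hi])]
    exact Finset.sum_congr rfl fun i hi => by simp [Finset.mem_range.mp hi]
  have hsplit : ∑ i ∈ range N, σ i * w i
      = (∑ i ∈ range N, (σ i - c) * w i) + c * W := by
    rw [hW, Finset.mul_sum, ← Finset.sum_add_distrib]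
    exact Finset.sum_congr rfl fun i _ => by ring
  have hsub : (∑ i ∈ range k, (σ i - c)) = (∑ i ∈ range k, σ i) - k * c := by
    rw [Finset.sum_sub_distrib, Finset.sum_const, Finset.card_range, nsmul_eq_mul]
  have hfin : (W / Υ) * (∑ i ∈ range k, σ i + (Υ - k) * c)
      = (∑ i ∈ range k, (σ i - c)) * (W / Υ) + c * W := by
    rw [hsub]
    field_simp
    ring
  have hpos : 0 < (W / Υ) * (∑ i ∈ range k, σ i + (Υ - k) * c) := mul_pos hWΥ hσ
  calc (0:ℝ) < (W / Υ) * (∑ i ∈ range k, σ i + (Υ - k) * c) := hpos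
    _ = (∑ i ∈ range k, (σ i - c)) * (W / Υ) + c * W := hfin
    _ ≤ (∑ i ∈ range N, (σ i - c) * w i) + c * W := by
        rw [← hleft]; linarith [hsum]
    _ = ∑ i ∈ range N, σ i * w i := hsplit.symm
end

section
/- Let V be a complex vector space of dimension n with unitary basis Z₁,…,Zₙ. For a (p,q)-form φ on V (an alternating (p+q)-form of type (p,q)), with the tensor norm convention under which |Z^{i₁} ∧ … ∧ Z^{iₚ} ∧ Z̄^{j₁} ∧ … ∧ Z̄^{j_q}|² = (p+q)!, one has (p+q)(p+q−1) Σ_{a,b=1}^{n} |ι_{Z_a} ι_{Z̄_b} φ|² = pq |φ|². -/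
/-- The squared tensor norm of a `(p,q)`-form given by its coefficients
`c(I,J) = φ(Z_{i₁},…,Z_{iₚ},Z̄_{j₁},…,Z̄_{j_q})` in a unitary basis, under the convention
`|Z^{i₁} ∧ … ∧ Z^{iₚ} ∧ Z̄^{j₁} ∧ … ∧ Z̄^{j_q}|² = (p+q)!`. -/
noncomputable def pqNormSq (n p q : ℕ)
    (c : (Fin p → Fin n) → (Fin q → Fin n) → ℂ) : ℝ :=
  ((p + q).choose p : ℝ) *
    ∑ I : Fin p → Fin n, ∑ J : Fin q → Fin n, Complex.normSq (c I J)

lemma sum_cons_decomp {n p : ℕ} (f : (Fin (p+1) → Fin n) → ℝ) :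
    ∑ a : Fin n, ∑ I : Fin p → Fin n, f (Fin.cons a I)
      = ∑ I : Fin (p+1) → Fin n, f I := by
  rw [← (Fin.consEquiv fun _ => Fin n).sum_comp f, Fintype.sum_prod_type]
  rfl

lemma nat_binom : ∀ p q : ℕ,
    (p+q+2) * ((p+q+1) * Nat.choose (p+q) p) = (p+1) * ((q+1) * Nat.choose (p+q+2) (p+1)) := by
  intro p q
  have h1 : (p+q+1) * Nat.choose (p+q) p = Nat.choose (p+q+1) (p+1) * (p+1) :=
    Nat.add_one_mul_choose_eq (p+q) p
  have h2 : Nat.choose (p+q+1) (p+1) = Nat.choose (p+q+1) q := by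
    have := Nat.choose_symm (n := p+q+1) (k := p+1) (by omega)
    simpa [show p+q+1-(p+1) = q by omega] using this.symm
  have h3 : (p+q+2) * Nat.choose (p+q+1) q = Nat.choose (p+q+2) (q+1) * (q+1) :=
    Nat.add_one_mul_choose_eq (p+q+1) q
  have h4 : Nat.choose (p+q+2) (q+1) = Nat.choose (p+q+2) (p+1) := by
    have := Nat.choose_symm (n := p+q+2) (k := q+1) (by omega)
    simpa [show p+q+2-(q+1) = p+1 by omega] using this.symm
  calc (p+q+2) * ((p+q+1) * Nat.choose (p+q) p)
      = (p+q+2) * (Nat.choose (p+q+1) (p+1) * (p+1)) := by rw [h1]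
    _ = ((p+q+2) * Nat.choose (p+q+1) q) * (p+1) := by rw [h2]; ring
    _ = (Nat.choose (p+q+2) (q+1) * (q+1)) * (p+1) := by rw [h3]
    _ = (p+1) * ((q+1) * Nat.choose (p+q+2) (p+1)) := by rw [h4]; ring

/-- For a `(p,q)`-form `φ` (antisymmetric in its holomorphic and antiholomorphic blocks),
`(p+q)(p+q−1) Σ_{a,b} |ι_{Z_a} ι_{Z̄_b} φ|² = pq |φ|²`. Here the degrees are `p+1, q+1`. -/
theorem contraction_norm_identity (n p q : ℕ)
    (c : (Fin (p + 1) → Fin n) → (Fin (q + 1) → Fin n) → ℂ)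
    (hI : ∀ (σ : Equiv.Perm (Fin (p + 1))) I J, c (I ∘ σ) J = (Equiv.Perm.sign σ : ℤ) * c I J)
    (hJ : ∀ (τ : Equiv.Perm (Fin (q + 1))) I J, c I (J ∘ τ) = (Equiv.Perm.sign τ : ℤ) * c I J) :
    (((p : ℝ) + q + 2) * ((p : ℝ) + q + 1)) *
        ∑ a : Fin n, ∑ b : Fin n,
          pqNormSq n p q (fun I J => c (Fin.cons a I) (Fin.cons b J))
      = ((p : ℝ) + 1) * ((q : ℝ) + 1) * pqNormSq n (p + 1) (q + 1) c := by
  unfold pqNormSq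
  have key : ∑ a : Fin n, ∑ b : Fin n, ∑ I : Fin p → Fin n, ∑ J : Fin q → Fin n,
      Complex.normSq (c (Fin.cons a I) (Fin.cons b J))
      = ∑ I : Fin (p+1) → Fin n, ∑ J : Fin (q+1) → Fin n, Complex.normSq (c I J) := by
    rw [← sum_cons_decomp (fun I => ∑ J : Fin (q+1) → Fin n, Complex.normSq (c I J))]
    congr 1; ext a
    rw [Finset.sum_comm]
    congr 1; ext I
    exact sum_cons_decomp (fun J => Complex.normSq (c (Fin.cons a I) J))
  simp only [← Finset.mul_sum]
  rw [key]
  have hb := nat_binom p q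
  have hb' : ((p:ℝ)+q+2) * (((p:ℝ)+q+1) * ((p+q).choose p : ℝ))
      = ((p:ℝ)+1) * (((q:ℝ)+1) * ((p+1+(q+1)).choose (p+1) : ℝ)) := by
    have := congrArg (Nat.cast (R := ℝ)) hb
    push_cast at this
    convert this using 3 <;> ring_nf
  linear_combination (∑ I : Fin (p+1) → Fin n, ∑ J : Fin (q+1) → Fin n, Complex.normSq (c I J)) * hb'
end

section
/- Let V be an n-dimensional complex Hermitian vector space, and let φ be a real form in Λ^{p,q}V* ⊕ Λ^{q,p}V* that is primitive (i.e., Λφ = 0 where Λ is the adjoint of the Lefschetz operator). Then the norm of the induced element φ^{⊙²V^{1,0}} = (1/4)Σ_{a,b} (Z_a ⊙ Z_b)φ ⊗ (Z̄_a ⊙ Z̄_b) satisfies |φ^{⊙²V^{1,0}}|² = (1/4)((p+q)(n+1) − 2pq)|φ|². -/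
/-!
Coefficient model for complex-valued forms on the complexification of a Kähler vector
space: a `k`-form `φ` is encoded by its coefficient function
`c : (Fin k → Fin n ⊕ Fin n) → ℂ`, where `Sum.inl a` stands for the `(1,0)` basis vector
`Z_a` and `Sum.inr a` for the `(0,1)` basis vector `Z̄_a` of a unitary basis, so that
`c K = φ(e_{K 0}, …, e_{K (k-1)})`.  The tensor norm is `|φ|² = Σ_K |c K|²`.
-/

/-- The index type: `inl a ↦ Z_a`, `inr a ↦ Z̄_a`. -/
abbrev CIdx (n : ℕ) := Fin n ⊕ Fin n

/-- `c` is (the coefficient function of) an alternating form. -/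
def IsAltForm (n k : ℕ) (c : (Fin k → CIdx n) → ℂ) : Prop :=
  ∀ (σ : Equiv.Perm (Fin k)) (K : Fin k → CIdx n),
    c (K ∘ σ) = (Equiv.Perm.sign σ : ℤ) * c K

/-- Number of holomorphic (unbarred) arguments of the tuple `K`. -/
def holCount (n k : ℕ) (K : Fin k → CIdx n) : ℕ :=
  (Finset.univ.filter fun i => (K i).isLeft = true).card

/-- Number of antiholomorphic (barred) arguments of the tuple `K`. -/
def antiCount (n k : ℕ) (K : Fin k → CIdx n) : ℕ :=
  (Finset.univ.filter fun i => (K i).isRight = true).card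

/-- `c` is a form of pure type `(p,q)`. -/
def IsTypePQ (n k p q : ℕ) (c : (Fin k → CIdx n) → ℂ) : Prop :=
  ∀ K, c K ≠ 0 → holCount n k K = p ∧ antiCount n k K = q

/-- `c` is a *real* form in `Λ^{p,q} ⊕ Λ^{q,p}`: its components are of type `(p,q)` or
`(q,p)` and conjugation (bar-swapping all arguments) acts by complex conjugation. -/
def IsRealPQ (n k p q : ℕ) (c : (Fin k → CIdx n) → ℂ) : Prop :=
  (∀ K, c K ≠ 0 →
      (holCount n k K = p ∧ antiCount n k K = q) ∨
      (holCount n k K = q ∧ antiCount n k K = p)) ∧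
  (∀ K, c (fun i => (K i).swap) = starRingEnd ℂ (c K))

/-- `c` is primitive: every contraction with the Kähler form vanishes, i.e. for all
argument slots `i ≠ j` the trace `Σ_a c(…,Z_a at i,…,Z̄_a at j,…)` vanishes. -/
def IsPrimitiveForm (n k : ℕ) (c : (Fin k → CIdx n) → ℂ) : Prop :=
  ∀ (K : Fin k → CIdx n) (i j : Fin k), i ≠ j →
    ∑ a : Fin n,
      c (Function.update (Function.update K i (Sum.inl a)) j (Sum.inr a)) = 0

/-- Squared tensor norm `|φ|² = Σ_K |c K|²`. -/
noncomputable def formNormSq (n k : ℕ) (c : (Fin k → CIdx n) → ℂ) : ℝ :=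
  ∑ K : Fin k → CIdx n, Complex.normSq (c K)

/-- Derivation action of `Z_a ⊙ Z_b ∈ ⊙² V^{1,0}` on forms:
`(Z_a ⊙ Z_b)` maps `Z̄_c ↦ δ_{ac} Z_b + δ_{bc} Z_a` and kills `(1,0)` vectors, and acts
on a form by `(Lφ)(ξ₁,…,ξ_k) = −Σᵢ φ(ξ₁,…,Lξᵢ,…,ξ_k)`. -/
noncomputable def odotAct (n k : ℕ) (a b : Fin n) (c : (Fin k → CIdx n) → ℂ) :
    (Fin k → CIdx n) → ℂ := fun K =>
  -∑ i : Fin k,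
    (match K i with
      | Sum.inl _ => 0
      | Sum.inr e =>
          (if e = a then c (Function.update K i (Sum.inl b)) else 0) +
          (if e = b then c (Function.update K i (Sum.inl a)) else 0))

/-- `|φ^{⊙² V^{1,0}}|² = (1/4) Σ_{a,b} |(Z_a ⊙ Z_b) φ|²` (for a real form `φ`). -/
noncomputable def odotNormSq (n k : ℕ) (c : (Fin k → CIdx n) → ℂ) : ℝ :=
  (1 / 4) * ∑ a : Fin n, ∑ b : Fin n, formNormSq n k (odotAct n k a b c)

/-- Derivation action on forms of a general `S = Σ_{a,b} S_{ab} Z_a ⊗ Z_b ∈ ⊙² V^{1,0}`: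
as an endomorphism `S(Z̄_e) = Σ_b S_{eb} Z_b` and `S` kills `(1,0)` vectors. -/
noncomputable def symAct (n k : ℕ) (S : Fin n → Fin n → ℂ) (c : (Fin k → CIdx n) → ℂ) :
    (Fin k → CIdx n) → ℂ := fun K =>
  -∑ i : Fin k,
    (match K i with
      | Sum.inl _ => 0
      | Sum.inr e => ∑ b : Fin n, S e b * c (Function.update K i (Sum.inl b)))

/-- Squared tensor norm of `S ∈ ⊙² V^{1,0}` (Frobenius norm of its matrix; for
`S = Σ λ_a Z_a ⊗ Z_a` in normal form this is `Σ λ_a²`). -/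
noncomputable def symNormSq (n : ℕ) (S : Fin n → Fin n → ℂ) : ℝ :=
  ∑ a : Fin n, ∑ b : Fin n, Complex.normSq (S a b)

lemma slot_sum {n k : ℕ} (i : Fin k) (x y : CIdx n) (F : (Fin k → CIdx n) → ℂ) :
    ∑ K : Fin k → CIdx n, (if K i = x then F (Function.update K i y) else 0)
      = ∑ K : Fin k → CIdx n, (if K i = y then F K else 0) := by
  have hinv : Function.Involutive
      (fun K : Fin k → CIdx n => Function.update K i (Equiv.swap x y (K i))) := by
    intro K
    simp [Function.update_idem, Function.update_self]
  refine Fintype.sum_bijective _ hinv.bijective _ _ (fun K => ?_)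
  by_cases h : K i = x
  · simp [h, Function.update_self, Function.update_idem]
  · have h2 : ¬ (Equiv.swap x y (K i) = y) := by
      intro hc
      exact h (by simpa using (Equiv.swap x y).injective (by simp [hc]))
    simp [h, Function.update_self, h2]
lemma pick_sum {n k : ℕ} (i : Fin k) (K : Fin k → CIdx n) (g : CIdx n → ℂ) :
    ∑ u : CIdx n, (if K i = u then g u else 0) = g (K i) := by
  rw [Finset.sum_ite_eq Finset.univ (K i) g]; simp
lemma avg_sum {n k : ℕ} (i : Fin k) (g : (Fin k → CIdx n) → ℂ) :
    ∑ u : CIdx n, ∑ K : Fin k → CIdx n, g (Function.update K i u)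
      = (2 * n : ℂ) * ∑ K : Fin k → CIdx n, g K := by
  have h1 : ∀ u : CIdx n, ∑ K : Fin k → CIdx n, g (Function.update K i u)
      = (2 * n : ℂ) * ∑ K : Fin k → CIdx n, (if K i = u then g K else 0) := by
    intro u
    calc ∑ K : Fin k → CIdx n, g (Function.update K i u)
        = ∑ K : Fin k → CIdx n, ∑ v : CIdx n,
            (if K i = v then g (Function.update K i u) else 0) := by
          refine Finset.sum_congr rfl (fun K _ => ?_)
          rw [Finset.sum_ite_eq Finset.univ (K i) (fun _ => g (Function.update K i u))]
          simp
      _ = ∑ v : CIdx n, ∑ K : Fin k → CIdx n,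
            (if K i = v then g (Function.update K i u) else 0) := Finset.sum_comm
      _ = ∑ _v : CIdx n, ∑ K : Fin k → CIdx n, (if K i = u then g K else 0) :=
          Finset.sum_congr rfl (fun v _ => slot_sum i v u g)
      _ = (2 * n : ℂ) * ∑ K : Fin k → CIdx n, (if K i = u then g K else 0) := by
          rw [Finset.sum_const, Finset.card_univ, Fintype.card_sum, Fintype.card_fin,
            nsmul_eq_mul]
          push_cast
          ring
  calc ∑ u : CIdx n, ∑ K : Fin k → CIdx n, g (Function.update K i u)
      = ∑ u : CIdx n, (2 * n : ℂ) * ∑ K : Fin k → CIdx n, (if K i = u then g K else 0) :=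
        Finset.sum_congr rfl (fun u _ => h1 u)
    _ = (2 * n : ℂ) * ∑ u : CIdx n, ∑ K : Fin k → CIdx n, (if K i = u then g K else 0) := by
        rw [Finset.mul_sum]
    _ = (2 * n : ℂ) * ∑ K : Fin k → CIdx n, ∑ u : CIdx n, (if K i = u then g K else 0) := by
        rw [Finset.sum_comm]
    _ = (2 * n : ℂ) * ∑ K : Fin k → CIdx n, g K := by
        congr 1
        exact Finset.sum_congr rfl (fun K _ => pick_sum i K (fun _ => g K))
lemma sum_inl_pick {n k : ℕ} (i : Fin k) (K : Fin k → CIdx n) (x : ℂ) :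
    ∑ b : Fin n, (if K i = Sum.inl b then x else 0)
      = (if (K i).isLeft then x else 0) := by
  rcases h : K i with e | e
  · rw [Finset.sum_eq_single e]
    · simp [h]
    · intro b _ hb; simp [h, Ne.symm hb, (show ¬ e = b from fun hc => hb hc.symm)]
    · simp
  · simp [h]
lemma sum_inr_pick {n k : ℕ} (i : Fin k) (K : Fin k → CIdx n) (x : ℂ) :
    ∑ b : Fin n, (if K i = Sum.inr b then x else 0)
      = (if (K i).isRight then x else 0) := by
  rcases h : K i with e | e
  · simp [h]
  · rw [Finset.sum_eq_single e]
    · simp [h]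
    · intro b _ hb; simp [h, (show ¬ e = b from fun hc => hb hc.symm)]
    · simp
lemma sum_isLeft_count {n k : ℕ} (K : Fin k → CIdx n) (x : ℂ) :
    ∑ i : Fin k, (if (K i).isLeft then x else 0) = (holCount n k K : ℂ) * x := by
  rw [Finset.sum_ite, Finset.sum_const, Finset.sum_const, holCount]
  simp [nsmul_eq_mul]
lemma sum_isRight_count {n k : ℕ} (K : Fin k → CIdx n) (x : ℂ) :
    ∑ i : Fin k, (if (K i).isRight then x else 0) = (antiCount n k K : ℂ) * x := by
  rw [Finset.sum_ite, Finset.sum_const, Finset.sum_const, antiCount]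
  simp [nsmul_eq_mul]
lemma holCount_add_antiCount {n k : ℕ} (K : Fin k → CIdx n) :
    holCount n k K + antiCount n k K = k := by
  rw [holCount, antiCount]
  have : (Finset.univ.filter fun i => (K i).isRight = true)
      = (Finset.univ.filter fun i => ¬ ((K i).isLeft = true)) := by
    refine Finset.filter_congr (fun i _ => ?_)
    rcases h : K i with e | e <;> simp [h]
  rw [this, Finset.card_filter_add_card_filter_not]
  simp
noncomputable def Gq {n k : ℕ} (c : (Fin k → CIdx n) → ℂ) (K : Fin k → CIdx n) : ℂ :=
  c K * (starRingEnd ℂ) (c K)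
noncomputable def Bop {n k : ℕ} (a b : Fin n) (c : (Fin k → CIdx n) → ℂ)
    (K : Fin k → CIdx n) : ℂ :=
  ∑ i : Fin k, if K i = Sum.inr a then c (Function.update K i (Sum.inl b)) else 0
lemma sum_inr_pick' {n k : ℕ} (i : Fin k) (K : Fin k → CIdx n) (f : Fin n → ℂ) :
    ∑ b : Fin n, (if K i = Sum.inr b then f b else 0)
      = Sum.elim (fun _ => (0:ℂ)) f (K i) := by
  rcases h : K i with e | e
  · simp [h]
  · rw [Finset.sum_eq_single e]
    · simp [h]
    · intro b _ hb; simp [h, (show ¬ e = b from fun hc => hb hc.symm)]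
    · simp
lemma double_pick {n k : ℕ} (i j : Fin k) (K : Fin k → CIdx n) (x : ℂ) :
    ∑ a : Fin n, ∑ b : Fin n,
        (if K i = Sum.inl b then (if K j = Sum.inr a then x else 0) else 0)
      = if (K i).isLeft ∧ (K j).isRight then x else 0 := by
  have h1 : ∀ a : Fin n, ∑ b : Fin n,
      (if K i = Sum.inl b then (if K j = Sum.inr a then x else 0) else 0)
      = if (K i).isLeft then (if K j = Sum.inr a then x else 0) else 0 :=
    fun a => sum_inl_pick i K _
  rw [Finset.sum_congr rfl (fun a _ => h1 a)]
  by_cases hL : (K i).isLeft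
  · simp only [hL, if_true]
    rw [sum_inr_pick j K x]
    by_cases hR : (K j).isRight <;> simp [hL, hR]
  · simp [hL]
lemma count_double {n k : ℕ} (K : Fin k → CIdx n) (x : ℂ) :
    ∑ i : Fin k, ∑ j : Fin k,
        (if (K i).isLeft ∧ (K j).isRight then x else 0)
      = (holCount n k K : ℂ) * ((antiCount n k K : ℂ) * x) := by
  have h1 : ∀ i : Fin k, ∑ j : Fin k, (if (K i).isLeft ∧ (K j).isRight then x else 0)
      = if (K i).isLeft then ((antiCount n k K : ℂ) * x) else 0 := by
    intro i
    by_cases hL : (K i).isLeft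
    · simp only [hL, true_and]
      exact sum_isRight_count K x
    · simp [hL]
  rw [Finset.sum_congr rfl (fun i _ => h1 i)]
  exact sum_isLeft_count K _
lemma pair1 {n k : ℕ} (c : (Fin k → CIdx n) → ℂ) (halt : IsAltForm n k c) (i j : Fin k) :
    ∑ a : Fin n, ∑ b : Fin n, ∑ K : Fin k → CIdx n,
        ((if K i = Sum.inr a then c (Function.update K i (Sum.inl b)) else 0) *
          (starRingEnd ℂ) (if K j = Sum.inr a then c (Function.update K j (Sum.inl b)) else 0))
      = if i = j then (n : ℂ) * ∑ K : Fin k → CIdx n, (if (K i).isLeft then Gq c K else 0)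
        else -∑ K : Fin k → CIdx n, (if (K i).isLeft ∧ (K j).isRight then Gq c K else 0) := by
  by_cases hij : i = j
  · subst hij
    rw [if_pos rfl]
    have hIn : ∀ (a b : Fin n) (K : Fin k → CIdx n),
        (if K i = Sum.inr a then c (Function.update K i (Sum.inl b)) else 0) *
          (starRingEnd ℂ) (if K i = Sum.inr a then c (Function.update K i (Sum.inl b)) else 0)
        = if K i = Sum.inr a then Gq c (Function.update K i (Sum.inl b)) else 0 := by
      intro a b K; by_cases h : K i = Sum.inr a <;> simp [h, Gq]
    calc ∑ a : Fin n, ∑ b : Fin n, ∑ K : Fin k → CIdx n,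
        ((if K i = Sum.inr a then c (Function.update K i (Sum.inl b)) else 0) *
          (starRingEnd ℂ) (if K i = Sum.inr a then c (Function.update K i (Sum.inl b)) else 0))
        = ∑ a : Fin n, ∑ b : Fin n, ∑ K : Fin k → CIdx n,
            (if K i = Sum.inr a then Gq c (Function.update K i (Sum.inl b)) else 0) := by
          refine Finset.sum_congr rfl (fun a _ => Finset.sum_congr rfl (fun b _ =>
            Finset.sum_congr rfl (fun K _ => hIn a b K)))
      _ = ∑ a : Fin n, ∑ b : Fin n, ∑ K : Fin k → CIdx n,
            (if K i = Sum.inl b then Gq c K else 0) := by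
          refine Finset.sum_congr rfl (fun a _ => Finset.sum_congr rfl (fun b _ => ?_))
          exact slot_sum i (Sum.inr a) (Sum.inl b) (Gq c)
      _ = ∑ a : Fin n, ∑ K : Fin k → CIdx n, (if (K i).isLeft then Gq c K else 0) := by
          refine Finset.sum_congr rfl (fun a _ => ?_)
          rw [Finset.sum_comm]
          exact Finset.sum_congr rfl (fun K _ => sum_inl_pick i K (Gq c K))
      _ = (n : ℂ) * ∑ K : Fin k → CIdx n, (if (K i).isLeft then Gq c K else 0) := by
          rw [Finset.sum_const, Finset.card_univ, Fintype.card_fin, nsmul_eq_mul]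
  · rw [if_neg hij]
    have hIn : ∀ (a b : Fin n) (K : Fin k → CIdx n),
        (if K i = Sum.inr a then c (Function.update K i (Sum.inl b)) else 0) *
          (starRingEnd ℂ) (if K j = Sum.inr a then c (Function.update K j (Sum.inl b)) else 0)
        = if K i = Sum.inr a then
            (if (Function.update K i (Sum.inl b)) j = Sum.inr a then
              -(Gq c (Function.update K i (Sum.inl b))) else 0) else 0 := by
      intro a b K
      by_cases h1 : K i = Sum.inr a
      · by_cases h2 : K j = Sum.inr a
        · have hswap : Function.update K j (Sum.inl b)
              = (Function.update K i (Sum.inl b)) ∘ (Equiv.swap i j) := by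
            funext l
            rcases eq_or_ne l i with rfl | hli
            · simp [Function.comp_apply, Equiv.swap_apply_left, hij, Ne.symm hij, h1, h2]
            · rcases eq_or_ne l j with rfl | hlj
              · rw [Function.update_self, Function.comp_apply, Equiv.swap_apply_right,
                  Function.update_self]
              · simp [Function.comp_apply, Equiv.swap_apply_of_ne_of_ne hli hlj, hli, hlj]
          have hsign := halt (Equiv.swap i j) (Function.update K i (Sum.inl b))
          rw [← hswap, Equiv.Perm.sign_swap hij] at hsign
          have hval : c (Function.update K j (Sum.inl b))
              = -c (Function.update K i (Sum.inl b)) := by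
            rw [hsign]; push_cast; ring
          have hcond : (Function.update K i (Sum.inl b)) j = Sum.inr a := by
            rw [Function.update_of_ne (Ne.symm hij)]; exact h2
          rw [if_pos h1, if_pos h2, if_pos h1, if_pos hcond, hval, Gq]
          simp only [map_neg]
          ring
        · have hcond : ¬ ((Function.update K i (Sum.inl b)) j = Sum.inr a) := by
            rw [Function.update_of_ne (Ne.symm hij)]; exact h2
          rw [if_neg h2, if_pos h1, if_pos h1, if_neg hcond]
          simp
      · rw [if_neg h1, if_neg h1]; ring
    calc ∑ a : Fin n, ∑ b : Fin n, ∑ K : Fin k → CIdx n,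
        ((if K i = Sum.inr a then c (Function.update K i (Sum.inl b)) else 0) *
          (starRingEnd ℂ) (if K j = Sum.inr a then c (Function.update K j (Sum.inl b)) else 0))
        = ∑ a : Fin n, ∑ b : Fin n, ∑ K : Fin k → CIdx n,
            (if K i = Sum.inr a then
              (if (Function.update K i (Sum.inl b)) j = Sum.inr a then
                -(Gq c (Function.update K i (Sum.inl b))) else 0) else 0) := by
          refine Finset.sum_congr rfl (fun a _ => Finset.sum_congr rfl (fun b _ =>
            Finset.sum_congr rfl (fun K _ => hIn a b K)))
      _ = ∑ a : Fin n, ∑ b : Fin n, ∑ K : Fin k → CIdx n,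
            (if K i = Sum.inl b then
              (if K j = Sum.inr a then -(Gq c K) else 0) else 0) := by
          refine Finset.sum_congr rfl (fun a _ => Finset.sum_congr rfl (fun b _ => ?_))
          exact slot_sum i (Sum.inr a) (Sum.inl b)
            (fun L => if L j = Sum.inr a then -(Gq c L) else 0)
      _ = ∑ K : Fin k → CIdx n, ∑ a : Fin n, ∑ b : Fin n,
            (if K i = Sum.inl b then
              (if K j = Sum.inr a then -(Gq c K) else 0) else 0) := by
          rw [show (∑ a : Fin n, ∑ b : Fin n, ∑ K : Fin k → CIdx n,
              (if K i = Sum.inl b then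
                (if K j = Sum.inr a then -(Gq c K) else 0) else 0))
            = ∑ a : Fin n, ∑ K : Fin k → CIdx n, ∑ b : Fin n,
              (if K i = Sum.inl b then
                (if K j = Sum.inr a then -(Gq c K) else 0) else 0) from
            Finset.sum_congr rfl (fun a _ => Finset.sum_comm)]
          rw [Finset.sum_comm]
      _ = ∑ K : Fin k → CIdx n,
            (if (K i).isLeft ∧ (K j).isRight then -(Gq c K) else 0) := by
          refine Finset.sum_congr rfl (fun K _ => double_pick i j K (-(Gq c K)))
      _ = -∑ K : Fin k → CIdx n,
            (if (K i).isLeft ∧ (K j).isRight then Gq c K else 0) := by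
          rw [← Finset.sum_neg_distrib]
          refine Finset.sum_congr rfl (fun K _ => ?_)
          by_cases h : (K i).isLeft ∧ (K j).isRight <;> simp [h]
lemma cross_zero {n k : ℕ} (c : (Fin k → CIdx n) → ℂ) (hprim : IsPrimitiveForm n k c)
    (i j : Fin k) (hij : i ≠ j) :
    ∑ K : Fin k → CIdx n,
      (∑ b : Fin n, if K j = Sum.inr b then c (Function.update K i (Sum.inl b)) else 0) *
        (starRingEnd ℂ)
          (∑ a : Fin n, if K i = Sum.inr a then c (Function.update K j (Sum.inl a)) else 0)
      = 0 := by
  set f : (Fin k → CIdx n) → ℂ := fun K =>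
    (∑ b : Fin n, if K j = Sum.inr b then c (Function.update K i (Sum.inl b)) else 0) *
      (starRingEnd ℂ)
        (∑ a : Fin n, if K i = Sum.inr a then c (Function.update K j (Sum.inl a)) else 0)
    with hf
  rcases Nat.eq_zero_or_pos n with hn | hn
  · subst hn; simp [hf]
  · have h2n : (2 * (n : ℂ)) ≠ 0 := by
      have : (n : ℂ) ≠ 0 := Nat.cast_ne_zero.mpr hn.ne'
      simp [this]
    have key : (2 * (n : ℂ)) * ∑ K : Fin k → CIdx n, f K = 0 := by
      rw [← avg_sum i f, Finset.sum_comm]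
      refine Finset.sum_eq_zero (fun K _ => ?_)
      have hP : ∀ u : CIdx n,
          (∑ b : Fin n, if (Function.update K i u) j = Sum.inr b then
              c (Function.update (Function.update K i u) i (Sum.inl b)) else 0)
          = ∑ b : Fin n, if K j = Sum.inr b then
              c (Function.update K i (Sum.inl b)) else 0 := by
        intro u
        refine Finset.sum_congr rfl (fun b _ => ?_)
        rw [Function.update_of_ne (Ne.symm hij), Function.update_idem]
      have hQ : ∑ u : CIdx n,
          (∑ a : Fin n, if (Function.update K i u) i = Sum.inr a then
              c (Function.update (Function.update K i u) j (Sum.inl a)) else 0) = 0 := by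
        have h1 : ∀ u : CIdx n,
            (∑ a : Fin n, if (Function.update K i u) i = Sum.inr a then
                c (Function.update (Function.update K i u) j (Sum.inl a)) else 0)
            = ∑ a : Fin n, if u = Sum.inr a then
                c (Function.update (Function.update K j (Sum.inl a)) i u) else 0 := by
          intro u
          refine Finset.sum_congr rfl (fun a _ => ?_)
          rw [Function.update_self, Function.update_comm hij]
        rw [Finset.sum_congr rfl (fun u _ => h1 u), Finset.sum_comm]
        have h2 : ∀ a : Fin n,
            (∑ u : CIdx n, if u = Sum.inr a then
                c (Function.update (Function.update K j (Sum.inl a)) i u) else 0)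
            = c (Function.update (Function.update K j (Sum.inl a)) i (Sum.inr a)) := by
          intro a
          rw [Finset.sum_ite_eq' Finset.univ (Sum.inr a)
            (fun u => c (Function.update (Function.update K j (Sum.inl a)) i u))]
          simp
        rw [Finset.sum_congr rfl (fun a _ => h2 a)]
        exact hprim K j i (Ne.symm hij)
      calc ∑ u : CIdx n, f (Function.update K i u)
          = ∑ u : CIdx n,
              ((∑ b : Fin n, if K j = Sum.inr b then
                  c (Function.update K i (Sum.inl b)) else 0) *
                (starRingEnd ℂ)
                  (∑ a : Fin n, if (Function.update K i u) i = Sum.inr a then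
                    c (Function.update (Function.update K i u) j (Sum.inl a)) else 0)) := by
            refine Finset.sum_congr rfl (fun u _ => ?_)
            rw [hf]; simp only []
            rw [hP u]
        _ = (∑ b : Fin n, if K j = Sum.inr b then
                c (Function.update K i (Sum.inl b)) else 0) *
              (starRingEnd ℂ) (∑ u : CIdx n,
                (∑ a : Fin n, if (Function.update K i u) i = Sum.inr a then
                  c (Function.update (Function.update K i u) j (Sum.inl a)) else 0)) := by
            rw [map_sum, Finset.mul_sum]
        _ = 0 := by rw [hQ]; simp
    exact (mul_eq_zero.mp key).resolve_left h2n
lemma pair2 {n k : ℕ} (c : (Fin k → CIdx n) → ℂ) (hprim : IsPrimitiveForm n k c)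
    (i j : Fin k) :
    ∑ a : Fin n, ∑ b : Fin n, ∑ K : Fin k → CIdx n,
        ((if K i = Sum.inr a then c (Function.update K i (Sum.inl b)) else 0) *
          (starRingEnd ℂ) (if K j = Sum.inr b then c (Function.update K j (Sum.inl a)) else 0))
      = if i = j then ∑ K : Fin k → CIdx n, (if (K i).isLeft then Gq c K else 0)
        else 0 := by
  by_cases hij : i = j
  · subst hij
    rw [if_pos rfl]
    calc ∑ a : Fin n, ∑ b : Fin n, ∑ K : Fin k → CIdx n,
        ((if K i = Sum.inr a then c (Function.update K i (Sum.inl b)) else 0) *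
          (starRingEnd ℂ) (if K i = Sum.inr b then c (Function.update K i (Sum.inl a)) else 0))
        = ∑ a : Fin n, ∑ K : Fin k → CIdx n, ∑ b : Fin n,
            ((if K i = Sum.inr a then c (Function.update K i (Sum.inl b)) else 0) *
              (starRingEnd ℂ) (if K i = Sum.inr b then c (Function.update K i (Sum.inl a)) else 0)) := by
          exact Finset.sum_congr rfl (fun a _ => Finset.sum_comm)
      _ = ∑ a : Fin n, ∑ K : Fin k → CIdx n,
            (if K i = Sum.inr a then Gq c (Function.update K i (Sum.inl a)) else 0) := by
          refine Finset.sum_congr rfl (fun a _ => Finset.sum_congr rfl (fun K _ => ?_))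
          by_cases h1 : K i = Sum.inr a
          · rw [Finset.sum_eq_single a]
            · simp only [if_pos h1]; rfl
            · intro b _ hb
              have : ¬ (K i = Sum.inr b) := by
                rw [h1]; simp [(show ¬ a = b from fun hc => hb hc.symm)]
              rw [if_neg this]; simp
            · simp
          · conv_rhs => rw [if_neg h1]
            exact Finset.sum_eq_zero (fun b _ => by simp [h1])
      _ = ∑ a : Fin n, ∑ K : Fin k → CIdx n,
            (if K i = Sum.inl a then Gq c K else 0) := by
          refine Finset.sum_congr rfl (fun a _ => ?_)
          exact slot_sum i (Sum.inr a) (Sum.inl a) (Gq c)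
      _ = ∑ K : Fin k → CIdx n, ∑ a : Fin n,
            (if K i = Sum.inl a then Gq c K else 0) := Finset.sum_comm
      _ = ∑ K : Fin k → CIdx n, (if (K i).isLeft then Gq c K else 0) := by
          exact Finset.sum_congr rfl (fun K _ => sum_inl_pick i K (Gq c K))
  · rw [if_neg hij]
    calc ∑ a : Fin n, ∑ b : Fin n, ∑ K : Fin k → CIdx n,
        ((if K i = Sum.inr a then c (Function.update K i (Sum.inl b)) else 0) *
          (starRingEnd ℂ) (if K j = Sum.inr b then c (Function.update K j (Sum.inl a)) else 0))
        = ∑ a : Fin n, ∑ b : Fin n, ∑ K : Fin k → CIdx n,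
            ((if K j = Sum.inr b then c (Function.update K i (Sum.inl b)) else 0) *
              (starRingEnd ℂ) (if K i = Sum.inr a then c (Function.update K j (Sum.inl a)) else 0)) := by
          refine Finset.sum_congr rfl (fun a _ => Finset.sum_congr rfl (fun b _ =>
            Finset.sum_congr rfl (fun K _ => ?_)))
          split_ifs <;> simp
      _ = ∑ a : Fin n, ∑ K : Fin k → CIdx n, ∑ b : Fin n,
            ((if K j = Sum.inr b then c (Function.update K i (Sum.inl b)) else 0) *
              (starRingEnd ℂ) (if K i = Sum.inr a then c (Function.update K j (Sum.inl a)) else 0)) := by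
          exact Finset.sum_congr rfl (fun a _ => Finset.sum_comm)
      _ = ∑ K : Fin k → CIdx n, ∑ a : Fin n, ∑ b : Fin n,
            ((if K j = Sum.inr b then c (Function.update K i (Sum.inl b)) else 0) *
              (starRingEnd ℂ) (if K i = Sum.inr a then c (Function.update K j (Sum.inl a)) else 0)) :=
          Finset.sum_comm
      _ = ∑ K : Fin k → CIdx n,
            ((∑ b : Fin n, if K j = Sum.inr b then c (Function.update K i (Sum.inl b)) else 0) *
              (starRingEnd ℂ)
                (∑ a : Fin n, if K i = Sum.inr a then c (Function.update K j (Sum.inl a)) else 0)) := by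
          refine Finset.sum_congr rfl (fun K _ => ?_)
          conv_rhs => rw [map_sum, Finset.sum_mul_sum]
          exact Finset.sum_comm
      _ = 0 := cross_zero c hprim i j hij
lemma two_H {n k p q : ℕ} (c : (Fin k → CIdx n) → ℂ) (hreal : IsRealPQ n k p q c) :
    2 * ∑ K : Fin k → CIdx n, (holCount n k K : ℂ) * Gq c K
      = (k : ℂ) * ∑ K : Fin k → CIdx n, Gq c K := by
  have hbar : ∀ K : Fin k → CIdx n, Gq c (fun i => (K i).swap) = Gq c K := by
    intro K
    rw [Gq, Gq, hreal.2 K, Complex.conj_conj]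
    ring
  have hinv : Function.Involutive (fun (K : Fin k → CIdx n) i => (K i).swap) :=
    fun K => funext (fun i => Sum.swap_swap (K i))
  have hcount : ∀ K : Fin k → CIdx n,
      antiCount n k (fun i => (K i).swap) = holCount n k K := by
    intro K
    rw [holCount, antiCount]
    congr 1
    refine Finset.filter_congr (fun i _ => ?_)
    rcases h : K i with e | e <;> simp [h]
  have key : ∑ K : Fin k → CIdx n, (holCount n k K : ℂ) * Gq c K
      = ∑ K : Fin k → CIdx n, (antiCount n k K : ℂ) * Gq c K := by
    refine Fintype.sum_bijective _ hinv.bijective _ _ (fun K => ?_)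
    rw [hcount K, hbar K]
  calc 2 * ∑ K : Fin k → CIdx n, (holCount n k K : ℂ) * Gq c K
      = (∑ K : Fin k → CIdx n, (holCount n k K : ℂ) * Gq c K)
        + ∑ K : Fin k → CIdx n, (antiCount n k K : ℂ) * Gq c K := by rw [← key]; ring
    _ = ∑ K : Fin k → CIdx n, ((holCount n k K : ℂ) + antiCount n k K) * Gq c K := by
        rw [← Finset.sum_add_distrib]
        exact Finset.sum_congr rfl (fun K _ => by ring)
    _ = (k : ℂ) * ∑ K : Fin k → CIdx n, Gq c K := by
        rw [Finset.mul_sum]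
        refine Finset.sum_congr rfl (fun K _ => ?_)
        have := holCount_add_antiCount K
        have hcast : (holCount n k K : ℂ) + antiCount n k K = (k : ℂ) := by
          exact_mod_cast congrArg (Nat.cast : ℕ → ℂ) this
        rw [hcast]
lemma M_eq {n k p q : ℕ} (c : (Fin k → CIdx n) → ℂ) (hreal : IsRealPQ n k p q c) :
    ∑ K : Fin k → CIdx n, (holCount n k K : ℂ) * ((antiCount n k K : ℂ) * Gq c K)
      = (p : ℂ) * (q : ℂ) * ∑ K : Fin k → CIdx n, Gq c K := by
  rw [Finset.mul_sum]
  refine Finset.sum_congr rfl (fun K _ => ?_)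
  by_cases hc : c K = 0
  · rw [Gq, hc]; ring
  · rcases hreal.1 K hc with ⟨h1, h2⟩ | ⟨h1, h2⟩ <;> rw [h1, h2] <;> push_cast <;> ring
lemma odot_eq {n k : ℕ} (a b : Fin n) (c : (Fin k → CIdx n) → ℂ) (K : Fin k → CIdx n) :
    odotAct n k a b c K = -(Bop a b c K + Bop b a c K) := by
  rw [odotAct, Bop, Bop, ← Finset.sum_add_distrib, neg_inj]
  refine Finset.sum_congr rfl (fun i _ => ?_)
  rcases h : K i with e | e
  · simp [h]
  · simp only [h]
    congr 1 <;> by_cases he : e = a <;> by_cases he' : e = b <;>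
      simp [he, he', Sum.inr.injEq] <;> simp [h]
lemma swap3 {A B C : Type*} [Fintype A] [Fintype B] [Fintype C]
    (f : A → B → C → ℂ) :
    ∑ a : A, ∑ b : B, ∑ z : C, f a b z = ∑ z : C, ∑ a : A, ∑ b : B, f a b z := by
  calc ∑ a : A, ∑ b : B, ∑ z : C, f a b z
      = ∑ a : A, ∑ z : C, ∑ b : B, f a b z :=
        Finset.sum_congr rfl (fun a _ => Finset.sum_comm)
    _ = ∑ z : C, ∑ a : A, ∑ b : B, f a b z := Finset.sum_comm
lemma swap5 {A B C D E : Type*} [Fintype A] [Fintype B] [Fintype C] [Fintype D] [Fintype E]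
    (f : A → B → C → D → E → ℂ) :
    ∑ a : A, ∑ b : B, ∑ z : C, ∑ i : D, ∑ j : E, f a b z i j
      = ∑ i : D, ∑ j : E, ∑ a : A, ∑ b : B, ∑ z : C, f a b z i j := by
  calc ∑ a : A, ∑ b : B, ∑ z : C, ∑ i : D, ∑ j : E, f a b z i j
      = ∑ a : A, ∑ b : B, ∑ i : D, ∑ z : C, ∑ j : E, f a b z i j :=
        Finset.sum_congr rfl (fun a _ => Finset.sum_congr rfl (fun b _ => Finset.sum_comm))
    _ = ∑ a : A, ∑ b : B, ∑ i : D, ∑ j : E, ∑ z : C, f a b z i j :=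
        Finset.sum_congr rfl (fun a _ => Finset.sum_congr rfl (fun b _ =>
          Finset.sum_congr rfl (fun i _ => Finset.sum_comm)))
    _ = ∑ a : A, ∑ i : D, ∑ b : B, ∑ j : E, ∑ z : C, f a b z i j :=
        Finset.sum_congr rfl (fun a _ => Finset.sum_comm)
    _ = ∑ a : A, ∑ i : D, ∑ j : E, ∑ b : B, ∑ z : C, f a b z i j :=
        Finset.sum_congr rfl (fun a _ => Finset.sum_congr rfl (fun i _ => Finset.sum_comm))
    _ = ∑ i : D, ∑ a : A, ∑ j : E, ∑ b : B, ∑ z : C, f a b z i j := Finset.sum_comm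
    _ = ∑ i : D, ∑ j : E, ∑ a : A, ∑ b : B, ∑ z : C, f a b z i j :=
        Finset.sum_congr rfl (fun i _ => Finset.sum_comm)
lemma Bii_zero {n k : ℕ} (c : (Fin k → CIdx n) → ℂ) (i : Fin k) :
    ∑ K : Fin k → CIdx n, (if (K i).isLeft ∧ (K i).isRight then Gq c K else 0) = 0 := by
  refine Finset.sum_eq_zero (fun K _ => ?_)
  rcases h : K i with e | e <;> simp [h]
lemma T1_eq {n k : ℕ} (c : (Fin k → CIdx n) → ℂ) (halt : IsAltForm n k c) :
    ∑ a : Fin n, ∑ b : Fin n, ∑ K : Fin k → CIdx n,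
        Bop a b c K * (starRingEnd ℂ) (Bop a b c K)
      = (n : ℂ) * ∑ K : Fin k → CIdx n, (holCount n k K : ℂ) * Gq c K
        - ∑ K : Fin k → CIdx n,
            (holCount n k K : ℂ) * ((antiCount n k K : ℂ) * Gq c K) := by
  calc ∑ a : Fin n, ∑ b : Fin n, ∑ K : Fin k → CIdx n,
        Bop a b c K * (starRingEnd ℂ) (Bop a b c K)
      = ∑ a : Fin n, ∑ b : Fin n, ∑ K : Fin k → CIdx n, ∑ i : Fin k, ∑ j : Fin k,
          ((if K i = Sum.inr a then c (Function.update K i (Sum.inl b)) else 0) *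
            (starRingEnd ℂ) (if K j = Sum.inr a then c (Function.update K j (Sum.inl b)) else 0)) := by
        refine Finset.sum_congr rfl (fun a _ => Finset.sum_congr rfl (fun b _ =>
          Finset.sum_congr rfl (fun K _ => ?_)))
        rw [Bop, map_sum, Finset.sum_mul_sum]
    _ = ∑ i : Fin k, ∑ j : Fin k, ∑ a : Fin n, ∑ b : Fin n, ∑ K : Fin k → CIdx n,
          ((if K i = Sum.inr a then c (Function.update K i (Sum.inl b)) else 0) *
            (starRingEnd ℂ) (if K j = Sum.inr a then c (Function.update K j (Sum.inl b)) else 0)) := by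
        have := swap5 (fun (a b : Fin n) (K : Fin k → CIdx n) (i j : Fin k) =>
          ((if K i = Sum.inr a then c (Function.update K i (Sum.inl b)) else 0) *
            (starRingEnd ℂ) (if K j = Sum.inr a then c (Function.update K j (Sum.inl b)) else 0)))
        exact this
    _ = ∑ i : Fin k, ∑ j : Fin k,
          (if i = j then (n : ℂ) * ∑ K : Fin k → CIdx n, (if (K i).isLeft then Gq c K else 0)
            else -∑ K : Fin k → CIdx n, (if (K i).isLeft ∧ (K j).isRight then Gq c K else 0)) := by
        refine Finset.sum_congr rfl (fun i _ => Finset.sum_congr rfl (fun j _ => pair1 c halt i j))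
    _ = ∑ i : Fin k, ∑ j : Fin k,
          ((if i = j then (n : ℂ) * ∑ K : Fin k → CIdx n, (if (K i).isLeft then Gq c K else 0) else 0)
            - ∑ K : Fin k → CIdx n, (if (K i).isLeft ∧ (K j).isRight then Gq c K else 0)) := by
        refine Finset.sum_congr rfl (fun i _ => Finset.sum_congr rfl (fun j _ => ?_))
        by_cases h : i = j
        · subst h
          rw [if_pos rfl, if_pos rfl, Bii_zero c i, sub_zero]
        · rw [if_neg h, if_neg h, zero_sub]
    _ = (n : ℂ) * ∑ K : Fin k → CIdx n, (holCount n k K : ℂ) * Gq c K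
        - ∑ K : Fin k → CIdx n,
            (holCount n k K : ℂ) * ((antiCount n k K : ℂ) * Gq c K) := by
        rw [Finset.sum_congr rfl (fun (i : Fin k) _ => Finset.sum_sub_distrib _ _),
          Finset.sum_sub_distrib]
        congr 1
        · calc ∑ i : Fin k, ∑ j : Fin k,
              (if i = j then (n : ℂ) * ∑ K : Fin k → CIdx n, (if (K i).isLeft then Gq c K else 0) else 0)
              = ∑ i : Fin k, (n : ℂ) * ∑ K : Fin k → CIdx n, (if (K i).isLeft then Gq c K else 0) := by
                refine Finset.sum_congr rfl (fun i _ => ?_)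
                rw [Finset.sum_ite_eq Finset.univ i
                  (fun _ => (n : ℂ) * ∑ K : Fin k → CIdx n, (if (K i).isLeft then Gq c K else 0))]
                simp
            _ = (n : ℂ) * ∑ i : Fin k, ∑ K : Fin k → CIdx n, (if (K i).isLeft then Gq c K else 0) := by
                rw [Finset.mul_sum]
            _ = (n : ℂ) * ∑ K : Fin k → CIdx n, (holCount n k K : ℂ) * Gq c K := by
                rw [Finset.sum_comm]
                exact congrArg _ (Finset.sum_congr rfl (fun K _ => sum_isLeft_count K (Gq c K)))
        · calc ∑ i : Fin k, ∑ j : Fin k, ∑ K : Fin k → CIdx n,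
              (if (K i).isLeft ∧ (K j).isRight then Gq c K else 0)
              = ∑ K : Fin k → CIdx n, ∑ i : Fin k, ∑ j : Fin k,
                  (if (K i).isLeft ∧ (K j).isRight then Gq c K else 0) := swap3 _
            _ = ∑ K : Fin k → CIdx n,
                  (holCount n k K : ℂ) * ((antiCount n k K : ℂ) * Gq c K) :=
                Finset.sum_congr rfl (fun K _ => count_double K (Gq c K))
lemma T2_eq {n k : ℕ} (c : (Fin k → CIdx n) → ℂ) (hprim : IsPrimitiveForm n k c) :
    ∑ a : Fin n, ∑ b : Fin n, ∑ K : Fin k → CIdx n,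
        Bop a b c K * (starRingEnd ℂ) (Bop b a c K)
      = ∑ K : Fin k → CIdx n, (holCount n k K : ℂ) * Gq c K := by
  calc ∑ a : Fin n, ∑ b : Fin n, ∑ K : Fin k → CIdx n,
        Bop a b c K * (starRingEnd ℂ) (Bop b a c K)
      = ∑ a : Fin n, ∑ b : Fin n, ∑ K : Fin k → CIdx n, ∑ i : Fin k, ∑ j : Fin k,
          ((if K i = Sum.inr a then c (Function.update K i (Sum.inl b)) else 0) *
            (starRingEnd ℂ) (if K j = Sum.inr b then c (Function.update K j (Sum.inl a)) else 0)) := by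
        refine Finset.sum_congr rfl (fun a _ => Finset.sum_congr rfl (fun b _ =>
          Finset.sum_congr rfl (fun K _ => ?_)))
        rw [Bop, Bop, map_sum, Finset.sum_mul_sum]
    _ = ∑ i : Fin k, ∑ j : Fin k, ∑ a : Fin n, ∑ b : Fin n, ∑ K : Fin k → CIdx n,
          ((if K i = Sum.inr a then c (Function.update K i (Sum.inl b)) else 0) *
            (starRingEnd ℂ) (if K j = Sum.inr b then c (Function.update K j (Sum.inl a)) else 0)) :=
        swap5 _
    _ = ∑ i : Fin k, ∑ j : Fin k,
          (if i = j then ∑ K : Fin k → CIdx n, (if (K i).isLeft then Gq c K else 0) else 0) := by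
        refine Finset.sum_congr rfl (fun i _ => Finset.sum_congr rfl (fun j _ =>
          pair2 c hprim i j))
    _ = ∑ i : Fin k, ∑ K : Fin k → CIdx n, (if (K i).isLeft then Gq c K else 0) := by
        refine Finset.sum_congr rfl (fun i _ => ?_)
        rw [Finset.sum_ite_eq Finset.univ i
          (fun _ => ∑ K : Fin k → CIdx n, (if (K i).isLeft then Gq c K else 0))]
        simp
    _ = ∑ K : Fin k → CIdx n, (holCount n k K : ℂ) * Gq c K := by
        rw [Finset.sum_comm]
        exact Finset.sum_congr rfl (fun K _ => sum_isLeft_count K (Gq c K))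
lemma main_complex {n k p q : ℕ} (c : (Fin k → CIdx n) → ℂ)
    (halt : IsAltForm n k c) (hreal : IsRealPQ n k p q c) (hprim : IsPrimitiveForm n k c) :
    ∑ a : Fin n, ∑ b : Fin n, ∑ K : Fin k → CIdx n,
        odotAct n k a b c K * (starRingEnd ℂ) (odotAct n k a b c K)
      = ((k : ℂ) * ((n : ℂ) + 1) - 2 * (p : ℂ) * (q : ℂ))
          * ∑ K : Fin k → CIdx n, Gq c K := by
  have hpt : ∀ (a b : Fin n) (K : Fin k → CIdx n),
      odotAct n k a b c K * (starRingEnd ℂ) (odotAct n k a b c K)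
      = Bop a b c K * (starRingEnd ℂ) (Bop a b c K)
        + Bop a b c K * (starRingEnd ℂ) (Bop b a c K)
        + (Bop b a c K * (starRingEnd ℂ) (Bop a b c K)
          + Bop b a c K * (starRingEnd ℂ) (Bop b a c K)) := by
    intro a b K
    rw [odot_eq a b c K]
    simp only [map_neg, map_add]
    ring
  have h1 := T1_eq c halt
  have h2 := T2_eq c hprim
  have h3 := two_H c hreal
  have h4 := M_eq c hreal
  calc ∑ a : Fin n, ∑ b : Fin n, ∑ K : Fin k → CIdx n,
      odotAct n k a b c K * (starRingEnd ℂ) (odotAct n k a b c K)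
      = ∑ a : Fin n, ∑ b : Fin n, ∑ K : Fin k → CIdx n,
          (Bop a b c K * (starRingEnd ℂ) (Bop a b c K)
            + Bop a b c K * (starRingEnd ℂ) (Bop b a c K)
            + (Bop b a c K * (starRingEnd ℂ) (Bop a b c K)
              + Bop b a c K * (starRingEnd ℂ) (Bop b a c K))) := by
        refine Finset.sum_congr rfl (fun a _ => Finset.sum_congr rfl (fun b _ =>
          Finset.sum_congr rfl (fun K _ => hpt a b K)))
    _ = (∑ a : Fin n, ∑ b : Fin n, ∑ K : Fin k → CIdx n,
            Bop a b c K * (starRingEnd ℂ) (Bop a b c K))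
        + (∑ a : Fin n, ∑ b : Fin n, ∑ K : Fin k → CIdx n,
            Bop a b c K * (starRingEnd ℂ) (Bop b a c K))
        + ((∑ a : Fin n, ∑ b : Fin n, ∑ K : Fin k → CIdx n,
            Bop b a c K * (starRingEnd ℂ) (Bop a b c K))
          + (∑ a : Fin n, ∑ b : Fin n, ∑ K : Fin k → CIdx n,
            Bop b a c K * (starRingEnd ℂ) (Bop b a c K))) := by
        simp only [Finset.sum_add_distrib]
    _ = ((k : ℂ) * ((n : ℂ) + 1) - 2 * (p : ℂ) * (q : ℂ))
          * ∑ K : Fin k → CIdx n, Gq c K := by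
        have e3 : (∑ a : Fin n, ∑ b : Fin n, ∑ K : Fin k → CIdx n,
              Bop b a c K * (starRingEnd ℂ) (Bop a b c K))
            = ∑ a : Fin n, ∑ b : Fin n, ∑ K : Fin k → CIdx n,
              Bop a b c K * (starRingEnd ℂ) (Bop b a c K) := Finset.sum_comm
        have e4 : (∑ a : Fin n, ∑ b : Fin n, ∑ K : Fin k → CIdx n,
              Bop b a c K * (starRingEnd ℂ) (Bop b a c K))
            = ∑ a : Fin n, ∑ b : Fin n, ∑ K : Fin k → CIdx n,
              Bop a b c K * (starRingEnd ℂ) (Bop a b c K) := Finset.sum_comm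
        rw [e3, e4, h1, h2]
        generalize hNN : (∑ K : Fin k → CIdx n, Gq c K) = NN at h3 h4 ⊢
        generalize hHH : (∑ K : Fin k → CIdx n, (holCount n k K : ℂ) * Gq c K) = HH at h3 ⊢
        generalize hMM : (∑ K : Fin k → CIdx n,
          (holCount n k K : ℂ) * ((antiCount n k K : ℂ) * Gq c K)) = MM at h4 ⊢
        linear_combination ((n : ℂ) + 1) * h3 - 2 * h4

/-- For a real primitive form `φ ∈ Λ^{p,q} ⊕ Λ^{q,p}` on an `n`-dimensional Kähler
vector space, `|φ^{⊙² V^{1,0}}|² = (1/4)((p+q)(n+1) − 2pq)|φ|²`. -/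
theorem odotNormSq_of_primitive (n k p q : ℕ) (hk : k = p + q)
    (c : (Fin k → CIdx n) → ℂ)
    (halt : IsAltForm n k c) (hreal : IsRealPQ n k p q c)
    (hprim : IsPrimitiveForm n k c) :
    odotNormSq n k c
      = (1 / 4) * (((p : ℝ) + q) * ((n : ℝ) + 1) - 2 * p * q) * formNormSq n k c := by
  subst hk
  have hN : ∀ f : (Fin (p + q) → CIdx n) → ℂ,
      ((formNormSq n (p + q) f : ℝ) : ℂ)
        = ∑ K : Fin (p + q) → CIdx n, f K * (starRingEnd ℂ) (f K) := by
    intro f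
    rw [formNormSq, Complex.ofReal_sum]
    exact Finset.sum_congr rfl (fun K _ => (Complex.mul_conj (f K)).symm)
  apply Complex.ofReal_injective
  have hmain := main_complex c halt hreal hprim
  have hGN : (∑ K : Fin (p + q) → CIdx n, Gq c K)
      = ∑ K : Fin (p + q) → CIdx n, c K * (starRingEnd ℂ) (c K) := rfl
  calc ((odotNormSq n (p + q) c : ℝ) : ℂ)
      = (1 / 4 : ℂ) * ∑ a : Fin n, ∑ b : Fin n,
          ((formNormSq n (p + q) (odotAct n (p + q) a b c) : ℝ) : ℂ) := by
        rw [odotNormSq]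
        push_cast
        ring
    _ = (1 / 4 : ℂ) * ∑ a : Fin n, ∑ b : Fin n, ∑ K : Fin (p + q) → CIdx n,
          odotAct n (p + q) a b c K * (starRingEnd ℂ) (odotAct n (p + q) a b c K) := by
        congr 1
        exact Finset.sum_congr rfl (fun a _ => Finset.sum_congr rfl (fun b _ => hN _))
    _ = (1 / 4 : ℂ) * ((((p + q : ℕ) : ℂ) * ((n : ℂ) + 1) - 2 * (p : ℂ) * (q : ℂ))
          * ∑ K : Fin (p + q) → CIdx n, Gq c K) := by
        rw [hmain]
    _ = ((1 / 4) * (((p : ℝ) + q) * ((n : ℝ) + 1) - 2 * p * q)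
          * formNormSq n (p + q) c : ℝ) := by
        rw [hGN]
        push_cast
        rw [hN c]
        ring
end

section
/- Let R be an algebraic curvature tensor on a Euclidean vector space (V,g) (satisfying the standard symmetries and the first Bianchi identity), and define R²(X ⊗ Y) by ⟨R²(X⊗Y), Z⊗W⟩ = R(X,Z,W,Y). Then for any p-form φ ∈ Λᵖ V, ⟨R²(φ^{gl}), φ^{gl}⟩ = −(p(p−1)/2) Σ_{i,j,k,l} Σ_{i₃,…,iₚ} R_{ijkl} φ_{ij i₃…iₚ} φ_{kl i₃…iₚ}, where φ^{gl} = Σ_{i,j} ((e_i ⊗ e_j)φ) ⊗ (e_i ⊗ e_j) for an orthonormal basis e_i, and endomorphisms act on forms as derivations. -/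
open Finset Function

section Helpers

def S4 {α : Type*} [Fintype α] (f : α → α → α → α → ℝ) : ℝ := ∑ a, ∑ b, ∑ c, ∑ d, f a b c d

lemma S4_congr {α : Type*} [Fintype α] {f g : α → α → α → α → ℝ}
    (h : ∀ a b c d, f a b c d = g a b c d) : S4 f = S4 g := by
  unfold S4
  exact Finset.sum_congr rfl fun a _ => Finset.sum_congr rfl fun b _ =>
    Finset.sum_congr rfl fun c _ => Finset.sum_congr rfl fun d _ => h a b c d

lemma S4_neg {α : Type*} [Fintype α] (f : α → α → α → α → ℝ) :
    S4 (fun a b c d => -f a b c d) = -S4 f := by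
  simp [S4]

lemma sw12 {α : Type*} [Fintype α] (f : α → α → α → α → ℝ) :
    S4 f = S4 (fun a b c d => f b a c d) :=
  Finset.sum_comm

lemma sw23 {α : Type*} [Fintype α] (f : α → α → α → α → ℝ) :
    S4 f = S4 (fun a b c d => f a c b d) :=
  Finset.sum_congr rfl fun _ _ => Finset.sum_comm

lemma sw34 {α : Type*} [Fintype α] (f : α → α → α → α → ℝ) :
    S4 f = S4 (fun a b c d => f a b d c) :=
  Finset.sum_congr rfl fun _ _ => Finset.sum_congr rfl fun _ _ => Finset.sum_comm

lemma lemB (m : ℕ) (R T : Fin m → Fin m → Fin m → Fin m → ℝ)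
    (hR2 : ∀ a b c d, R a b c d = -R a b d c)
    (hB : ∀ a b c d, R a b c d + R b c a d + R c a b d = 0)
    (hT1 : ∀ a b c d, T a b c d = -T b a c d)
    (hT2 : ∀ a b c d, T a b c d = -T a b d c)
    (hTp : ∀ a b c d, T a b c d = T c d a b) :
    S4 (fun a b c d => R a c d b * T b c a d)
      = -(1/2) * S4 (fun a b c d => R a b c d * T a b c d) := by
  set U := S4 (fun a b c d => R a b c d * T a b c d) with hU
  set P := S4 (fun a b c d => R a b c d * T a c b d) with hPdef
  have hS : S4 (fun a b c d => R a c d b * T b c a d) = -P := by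
    rw [sw23 (fun a b c d => R a c d b * T b c a d)]
    rw [sw34 (fun a b c d => R a b d c * T c b a d)]
    rw [show (fun a b c d => R a b c d * T d b a c)
        = fun a b c d => -(R a b c d * T a c b d) by
      funext a b c d; rw [hTp d b a c, hT2 a c d b]; ring]
    rw [S4_neg, hPdef]
  have hV : S4 (fun a b c d => R a b c d * T a d b c) = -P := by
    rw [sw34 (fun a b c d => R a b c d * T a d b c)]
    rw [show (fun a b c d => R a b d c * T a c b d)
        = fun a b c d => -(R a b c d * T a c b d) by
      funext a b c d; rw [hR2 a b c d]; ring]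
    rw [S4_neg, hPdef]
  have hzero : U + (-P) + (-P) = 0 := by
    have h0 : S4 (fun a b c d =>
        (R a b c d + R b c a d + R c a b d) * T a b c d) = 0 := by
      rw [show (fun a b c d => (R a b c d + R b c a d + R c a b d) * T a b c d)
          = fun _ _ _ _ => (0:ℝ) by
        funext a b c d; rw [hB a b c d]; ring]
      simp [S4]
    have hsplit : S4 (fun a b c d => (R a b c d + R b c a d + R c a b d) * T a b c d)
        = S4 (fun a b c d => R a b c d * T a b c d)
          + S4 (fun a b c d => R b c a d * T a b c d)
          + S4 (fun a b c d => R c a b d * T a b c d) := by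
      simp only [S4, add_mul, Finset.sum_add_distrib]
    have hX2 : S4 (fun a b c d => R b c a d * T a b c d) = -P := by
      rw [sw12 (fun a b c d => R b c a d * T a b c d)]
      rw [sw23 (fun a b c d => R a c b d * T b a c d)]
      rw [show (fun a b c d => R a b c d * T c a b d)
          = fun a b c d => -(R a b c d * T a c b d) by
        funext a b c d; rw [hT1 c a b d]; ring]
      rw [S4_neg, hPdef]
    have hX3 : S4 (fun a b c d => R c a b d * T a b c d) = -P := by
      rw [sw23 (fun a b c d => R c a b d * T a b c d)]
      rw [sw12 (fun a b c d => R b a c d * T a c b d)]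
      rw [show (fun a b c d => R a b c d * T b c a d)
          = fun a b c d => R a b c d * T a d b c by
        funext a b c d; rw [hTp b c a d]]
      exact hV
    rw [hsplit, hX2, hX3, ← hU] at h0
    exact h0
  rw [hS]
  have : P = U / 2 := by linarith
  rw [this]; ring

lemma exists_perm (n : ℕ) (s t : Fin (n+2)) (hst : s ≠ t) :
    ∃ σ : Equiv.Perm (Fin (n+2)), σ 0 = s ∧ σ 1 = t := by
  classical
  set τ₁ := Equiv.swap (0 : Fin (n+2)) s with hτ₁
  have ht0 : τ₁ t ≠ 0 := by
    intro h
    rcases eq_or_ne t 0 with h0 | h0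
    · subst h0
      rw [hτ₁, Equiv.swap_apply_left] at h
      exact hst h
    · have hts : t ≠ s := fun h' => hst h'.symm
      rw [hτ₁, Equiv.swap_apply_of_ne_of_ne h0 hts] at h
      exact h0 h
  refine ⟨τ₁ * Equiv.swap 1 (τ₁ t), ?_, ?_⟩
  · have h1 : Equiv.swap (1 : Fin (n+2)) (τ₁ t) 0 = 0 :=
      Equiv.swap_apply_of_ne_of_ne Fin.zero_ne_one (Ne.symm ht0)
    rw [Equiv.Perm.mul_apply, h1, hτ₁, Equiv.swap_apply_left]
  · rw [Equiv.Perm.mul_apply, Equiv.swap_apply_left, hτ₁, Equiv.swap_apply_self]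

lemma pairSum (p m : ℕ) (c : (Fin (p + 2) → Fin m) → ℝ)
    (halt : ∀ (σ : Equiv.Perm (Fin (p + 2))) (K : Fin (p + 2) → Fin m),
      c (K ∘ σ) = (Equiv.Perm.sign σ : ℤ) * c K)
    (s t : Fin (p+2)) (hst : s ≠ t) (i j k l : Fin m) :
    ∑ K : Fin (p+2) → Fin m,
        (if K s = i then c (update K s j) else 0) * (if K t = k then c (update K t l) else 0)
      = ∑ M : Fin p → Fin m, c (Fin.cons j (Fin.cons k M)) * c (Fin.cons i (Fin.cons l M)) := by
  classical
  obtain ⟨σ, hσ0, hσ1⟩ := exists_perm p s t hst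
  have hsymm0 : σ.symm s = 0 := by rw [← hσ0, Equiv.symm_apply_apply]
  have hsymm1 : σ.symm t = 1 := by rw [← hσ1, Equiv.symm_apply_apply]
  have hsign : ∀ A B : Fin (p+2) → Fin m,
      c (A ∘ ⇑σ.symm) * c (B ∘ ⇑σ.symm) = c A * c B := by
    intro A B
    rw [halt σ.symm A, halt σ.symm B]
    rcases Int.units_eq_one_or (Equiv.Perm.sign σ.symm) with h | h <;> rw [h] <;> push_cast <;> ring
  have key : ∀ K : Fin (p+2) → Fin m,
      (if (K ∘ ⇑σ.symm) s = i then c (update (K ∘ ⇑σ.symm) s j) else 0)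
        * (if (K ∘ ⇑σ.symm) t = k then c (update (K ∘ ⇑σ.symm) t l) else 0)
      = (if K 0 = i then c (update K 0 j) else 0) * (if K 1 = k then c (update K 1 l) else 0) := by
    intro K
    have e1 : update (K ∘ ⇑σ.symm) s j = update K 0 j ∘ ⇑σ.symm := by
      rw [Function.update_comp_equiv K σ.symm 0 j, Equiv.symm_symm, hσ0]
    have e2 : update (K ∘ ⇑σ.symm) t l = update K 1 l ∘ ⇑σ.symm := by
      rw [Function.update_comp_equiv K σ.symm 1 l, Equiv.symm_symm, hσ1]
    simp only [Function.comp_apply, hsymm0, hsymm1, e1, e2]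
    by_cases h0 : K 0 = i <;> by_cases h1 : K 1 = k <;> simp [h0, h1, hsign]
  calc ∑ K : Fin (p+2) → Fin m,
        (if K s = i then c (update K s j) else 0) * (if K t = k then c (update K t l) else 0)
      = ∑ K : Fin (p+2) → Fin m,
        (if K 0 = i then c (update K 0 j) else 0) * (if K 1 = k then c (update K 1 l) else 0) := by
        rw [← Equiv.sum_comp (Equiv.arrowCongr σ (Equiv.refl (Fin m)))
          (fun K => (if K s = i then c (update K s j) else 0) * (if K t = k then c (update K t l) else 0))]
        exact Finset.sum_congr rfl fun K _ => key K
    _ = ∑ M : Fin p → Fin m, c (Fin.cons j (Fin.cons k M)) * c (Fin.cons i (Fin.cons l M)) := by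
        rw [← Equiv.sum_comp (Fin.consEquiv (fun _ : Fin (p+2) => Fin m)), Fintype.sum_prod_type]
        have hu1 : ∀ (x : Fin m) (y : Fin (p+1) → Fin m),
            Function.update (Fin.cons x y : Fin (p+2) → Fin m) 1 l
              = Fin.cons x (Function.update y 0 l) := by
          intro x y
          rw [← Fin.succ_zero_eq_one, ← Fin.cons_update]
        simp only [Fin.consEquiv_apply, Fin.cons_zero, Fin.cons_one, Fin.update_cons_zero, hu1,
          ite_mul, zero_mul]
        rw [Finset.sum_comm]
        simp only [Finset.sum_ite_eq', Finset.mem_univ, if_true]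
        rw [← Equiv.sum_comp (Fin.consEquiv (fun _ : Fin (p+1) => Fin m)), Fintype.sum_prod_type]
        simp only [Fin.consEquiv_apply, Fin.cons_zero, Fin.update_cons_zero, mul_ite, mul_zero]
        rw [Finset.sum_comm]
        simp only [Finset.sum_ite_eq', Finset.mem_univ, if_true, Fin.consEquiv_apply]
        refine Finset.sum_congr rfl fun M _ => ?_
        have hc : ((Fin.consEquiv fun _ : Fin (p+2) => Fin m)
            (i, (Fin.consEquiv fun _ : Fin (p+1) => Fin m) (k, M))) = Fin.cons i (Fin.cons k M) := rfl
        rw [hc, Fin.update_cons_zero, hu1, Fin.update_cons_zero]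

lemma move2 {α β γ : Type*} [Fintype α] [Fintype β] [Fintype γ] (f : α → β → γ → ℝ) :
    ∑ x : α, ∑ s : β, ∑ t : γ, f x s t = ∑ s : β, ∑ t : γ, ∑ x : α, f x s t := by
  rw [Finset.sum_comm]
  exact Finset.sum_congr rfl fun s _ => Finset.sum_comm

lemma pull4 {α β : Type*} [Fintype α] [Fintype β] (g : α → α → α → α → β → β → ℝ) :
    ∑ i, ∑ j, ∑ k, ∑ l, ∑ s, ∑ t, g i j k l s t
      = ∑ s, ∑ t, ∑ i, ∑ j, ∑ k, ∑ l, g i j k l s t := by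
  have h1 : ∀ i j k, ∑ l, ∑ s, ∑ t, g i j k l s t = ∑ s, ∑ t, ∑ l, g i j k l s t :=
    fun i j k => move2 _
  have h2 : ∀ i j, ∑ k, ∑ s, ∑ t, ∑ l, g i j k l s t = ∑ s, ∑ t, ∑ k, ∑ l, g i j k l s t :=
    fun i j => move2 _
  have h3 : ∀ i, ∑ j, ∑ s, ∑ t, ∑ k, ∑ l, g i j k l s t
      = ∑ s, ∑ t, ∑ j, ∑ k, ∑ l, g i j k l s t := fun i => move2 _
  calc ∑ i, ∑ j, ∑ k, ∑ l, ∑ s, ∑ t, g i j k l s t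
      = ∑ i, ∑ j, ∑ k, ∑ s, ∑ t, ∑ l, g i j k l s t := by
        exact Finset.sum_congr rfl fun i _ => Finset.sum_congr rfl fun j _ =>
          Finset.sum_congr rfl fun k _ => h1 i j k
    _ = ∑ i, ∑ j, ∑ s, ∑ t, ∑ k, ∑ l, g i j k l s t := by
        exact Finset.sum_congr rfl fun i _ => Finset.sum_congr rfl fun j _ => h2 i j
    _ = ∑ i, ∑ s, ∑ t, ∑ j, ∑ k, ∑ l, g i j k l s t := by
        exact Finset.sum_congr rfl fun i _ => h3 i
    _ = ∑ s, ∑ t, ∑ i, ∑ j, ∑ k, ∑ l, g i j k l s t := move2 _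

lemma pull1 {α β : Type*} [Fintype α] [Fintype β] (g : α → α → α → α → β → ℝ) :
    ∑ i, ∑ j, ∑ k, ∑ l, ∑ K, g i j k l K = ∑ K, ∑ i, ∑ j, ∑ k, ∑ l, g i j k l K := by
  calc ∑ i, ∑ j, ∑ k, ∑ l, ∑ K, g i j k l K
      = ∑ i, ∑ j, ∑ k, ∑ K, ∑ l, g i j k l K := by
        exact Finset.sum_congr rfl fun i _ => Finset.sum_congr rfl fun j _ =>
          Finset.sum_congr rfl fun k _ => Finset.sum_comm
    _ = ∑ i, ∑ j, ∑ K, ∑ k, ∑ l, g i j k l K := by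
        exact Finset.sum_congr rfl fun i _ => Finset.sum_congr rfl fun j _ => Finset.sum_comm
    _ = ∑ i, ∑ K, ∑ j, ∑ k, ∑ l, g i j k l K := by
        exact Finset.sum_congr rfl fun i _ => Finset.sum_comm
    _ = ∑ K, ∑ i, ∑ j, ∑ k, ∑ l, g i j k l K := Finset.sum_comm

end Helpers



/-- Derivation action of the elementary endomorphism `e_i ⊗ e_j` (i.e. `e_k ↦ δ_{ik} e_j`)
on a `k`-form given in coefficients: `(Lφ)(ξ₁,…,ξ_k) = −Σ_s φ(ξ₁,…,Lξ_s,…,ξ_k)`. -/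
def glAct (m k : ℕ) (i j : Fin m) (c : (Fin k → Fin m) → ℝ) : (Fin k → Fin m) → ℝ :=
  fun K => -∑ s : Fin k, if K s = i then c (Function.update K s j) else 0

/-- For an algebraic curvature tensor `R` and a `p`-form `φ` (here of degree `p+2`),
`⟨R²(φ^{gl}), φ^{gl}⟩ = −(p(p−1)/2) Σ R_{ijkl} φ_{ij i₃…} φ_{kl i₃…}` where
`⟨R²(e_i⊗e_j), e_k⊗e_l⟩ = R_{iklj}` and `φ^{gl} = Σ_{i,j} ((e_i⊗e_j)φ) ⊗ (e_i⊗e_j)`. -/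
theorem r2_gl_pairing (m p : ℕ) (R : Fin m → Fin m → Fin m → Fin m → ℝ)
    (hsym1 : ∀ i j k l, R i j k l = -R j i k l)
    (hsym2 : ∀ i j k l, R i j k l = -R i j l k)
    (hsym3 : ∀ i j k l, R i j k l = R k l i j)
    (hbianchi : ∀ i j k l, R i j k l + R j k i l + R k i j l = 0)
    (c : (Fin (p + 2) → Fin m) → ℝ)
    (halt : ∀ (σ : Equiv.Perm (Fin (p + 2))) (K : Fin (p + 2) → Fin m),
      c (K ∘ σ) = (Equiv.Perm.sign σ : ℤ) * c K) :
    ∑ i : Fin m, ∑ j : Fin m, ∑ k : Fin m, ∑ l : Fin m,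
        R i k l j * ∑ K : Fin (p + 2) → Fin m,
          glAct m (p + 2) i j c K * glAct m (p + 2) k l c K
      = -((((p : ℝ) + 2) * ((p : ℝ) + 1)) / 2) *
          ∑ i : Fin m, ∑ j : Fin m, ∑ k : Fin m, ∑ l : Fin m,
            R i j k l * ∑ K' : Fin p → Fin m,
              c (Fin.cons i (Fin.cons j K')) * c (Fin.cons k (Fin.cons l K')) := by
  classical
  -- the pairing tensor T
  set T : Fin m → Fin m → Fin m → Fin m → ℝ := fun a b u v =>
    ∑ K' : Fin p → Fin m, c (Fin.cons a (Fin.cons b K')) * c (Fin.cons u (Fin.cons v K'))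
    with hT
  -- swapping the first two entries of c
  have c_swap : ∀ (x y : Fin m) (M : Fin p → Fin m),
      c (Fin.cons y (Fin.cons x M)) = -c (Fin.cons x (Fin.cons y M)) := by
    intro x y M
    have hcomp : (Fin.cons x (Fin.cons y M) : Fin (p+2) → Fin m) ∘ ⇑(Equiv.swap 0 1)
        = Fin.cons y (Fin.cons x M) := by
      funext z
      simp only [Function.comp_apply]
      refine Fin.cases ?_ (fun w => ?_) z
      · rw [Equiv.swap_apply_left, Fin.cons_one]; simp
      · refine Fin.cases ?_ (fun v => ?_) w
        · rw [Fin.succ_zero_eq_one, Equiv.swap_apply_right, Fin.cons_zero]; simp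
        · have h0 : (v.succ.succ : Fin (p+2)) ≠ 0 := Fin.succ_ne_zero _
          have h1 : (v.succ.succ : Fin (p+2)) ≠ 1 := by
            rw [← Fin.succ_zero_eq_one]
            exact fun h => (Fin.succ_ne_zero v) (Fin.succ_injective _ h)
          rw [Equiv.swap_apply_of_ne_of_ne h0 h1, Fin.cons_succ, Fin.cons_succ,
            Fin.cons_succ, Fin.cons_succ]
    have hs := halt (Equiv.swap 0 1) (Fin.cons x (Fin.cons y M))
    rw [hcomp, Equiv.Perm.sign_swap Fin.zero_ne_one] at hs
    rw [hs]; push_cast; ring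
  -- symmetries of T
  have hT1 : ∀ a b u v, T a b u v = -T b a u v := by
    intro a b u v
    rw [hT]
    simp only
    rw [← Finset.sum_neg_distrib]
    exact Finset.sum_congr rfl fun K' _ => by rw [c_swap a b K']; ring
  have hT2 : ∀ a b u v, T a b u v = -T a b v u := by
    intro a b u v
    rw [hT]
    simp only
    rw [← Finset.sum_neg_distrib]
    exact Finset.sum_congr rfl fun K' _ => by rw [c_swap u v K']; ring
  have hTp : ∀ a b u v, T a b u v = T u v a b := by
    intro a b u v
    rw [hT]
    exact Finset.sum_congr rfl fun K' _ => mul_comm _ _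
  -- the constant value for off-diagonal (s,t)
  set C : ℝ := ∑ i, ∑ j, ∑ k, ∑ l, R i k l j * T j k i l with hC
  -- expand the left side into a sum over (s,t)
  have expand : ∀ i j k l : Fin m,
      (∑ K : Fin (p+2) → Fin m, glAct m (p+2) i j c K * glAct m (p+2) k l c K)
        = ∑ s : Fin (p+2), ∑ t : Fin (p+2), ∑ K : Fin (p+2) → Fin m,
            (if K s = i then c (update K s j) else 0) * (if K t = k then c (update K t l) else 0) := by
    intro i j k l
    have h1 : ∀ K : Fin (p+2) → Fin m,
        glAct m (p+2) i j c K * glAct m (p+2) k l c K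
          = ∑ s : Fin (p+2), ∑ t : Fin (p+2),
              (if K s = i then c (update K s j) else 0) * (if K t = k then c (update K t l) else 0) := by
      intro K
      show (-∑ s : Fin (p+2), if K s = i then c (update K s j) else 0) *
          (-∑ t : Fin (p+2), if K t = k then c (update K t l) else 0) = _
      rw [neg_mul_neg, Finset.sum_mul_sum]
    rw [Finset.sum_congr rfl fun K _ => h1 K]
    exact move2 _
  have step1 : ∑ i : Fin m, ∑ j : Fin m, ∑ k : Fin m, ∑ l : Fin m,
        R i k l j * ∑ K : Fin (p + 2) → Fin m,
          glAct m (p + 2) i j c K * glAct m (p + 2) k l c K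
      = ∑ s : Fin (p+2), ∑ t : Fin (p+2), ∑ i, ∑ j, ∑ k, ∑ l,
          R i k l j * ∑ K : Fin (p+2) → Fin m,
            (if K s = i then c (update K s j) else 0) * (if K t = k then c (update K t l) else 0) := by
    rw [← pull4 (fun i j k l s t => R i k l j * ∑ K : Fin (p+2) → Fin m,
      (if K s = i then c (update K s j) else 0) * (if K t = k then c (update K t l) else 0))]
    refine Finset.sum_congr rfl fun i _ => Finset.sum_congr rfl fun j _ =>
      Finset.sum_congr rfl fun k _ => Finset.sum_congr rfl fun l _ => ?_
    rw [expand i j k l, Finset.mul_sum]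
    exact Finset.sum_congr rfl fun s _ => Finset.mul_sum _ _ _
  -- vanishing of R with equal first two indices
  have hR0 : ∀ x a b, R x x a b = 0 := by
    intro x a b; have := hsym1 x x a b; linarith
  -- diagonal terms vanish
  have hdiag : ∀ s : Fin (p+2), (∑ i, ∑ j, ∑ k, ∑ l,
      R i k l j * ∑ K : Fin (p+2) → Fin m,
        (if K s = i then c (update K s j) else 0) * (if K s = k then c (update K s l) else 0)) = 0 := by
    intro s
    have inner_zero : ∀ K : Fin (p+2) → Fin m,
        S4 (fun i j k l => R i k l j *
          ((if K s = i then c (update K s j) else 0) * (if K s = k then c (update K s l) else 0))) = 0 := by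
      intro K
      rw [sw23 (fun i j k l => R i k l j *
        ((if K s = i then c (update K s j) else 0) * (if K s = k then c (update K s l) else 0)))]
      show (∑ a, ∑ b, ∑ u, ∑ v, R a b v u *
        ((if K s = a then c (update K s u) else 0) * (if K s = b then c (update K s v) else 0))) = 0
      have hcd : ∀ a b : Fin m, (∑ u, ∑ v, R a b v u *
          ((if K s = a then c (update K s u) else 0) * (if K s = b then c (update K s v) else 0)))
          = if K s = a then (if K s = b then
              (∑ u, ∑ v, R a b v u * c (update K s u) * c (update K s v)) else 0) else 0 := by
        intro a b
        by_cases h1 : K s = a <;> by_cases h2 : K s = b <;> simp [h1, h2, mul_assoc]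
      rw [Finset.sum_congr rfl fun a _ => Finset.sum_congr rfl fun b _ => hcd a b]
      have hb : ∀ a : Fin m, (∑ b, if K s = a then (if K s = b then
          (∑ u, ∑ v, R a b v u * c (update K s u) * c (update K s v)) else 0) else 0)
          = if K s = a then
              (∑ u, ∑ v, R a (K s) v u * c (update K s u) * c (update K s v)) else 0 := by
        intro a
        by_cases h1 : K s = a <;> simp [h1, Finset.sum_ite_eq]
      rw [Finset.sum_congr rfl fun a _ => hb a]
      rw [Finset.sum_ite_eq]
      simp [hR0]
    have pullK : (∑ i, ∑ j, ∑ k, ∑ l, R i k l j * ∑ K : Fin (p+2) → Fin m,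
        (if K s = i then c (update K s j) else 0) * (if K s = k then c (update K s l) else 0))
        = ∑ K : Fin (p+2) → Fin m, ∑ i, ∑ j, ∑ k, ∑ l, R i k l j *
            ((if K s = i then c (update K s j) else 0) * (if K s = k then c (update K s l) else 0)) := by
      rw [← pull1 (fun i j k l K => R i k l j *
        ((if K s = i then c (update K s j) else 0) * (if K s = k then c (update K s l) else 0)))]
      exact Finset.sum_congr rfl fun i _ => Finset.sum_congr rfl fun j _ =>
        Finset.sum_congr rfl fun k _ => Finset.sum_congr rfl fun l _ => Finset.mul_sum _ _ _
    rw [pullK]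
    exact Finset.sum_eq_zero fun K _ => inner_zero K
  -- off-diagonal terms
  have hoff : ∀ s t : Fin (p+2), s ≠ t → (∑ i, ∑ j, ∑ k, ∑ l,
      R i k l j * ∑ K : Fin (p+2) → Fin m,
        (if K s = i then c (update K s j) else 0) * (if K t = k then c (update K t l) else 0)) = C := by
    intro s t hst
    rw [hC]
    refine Finset.sum_congr rfl fun i _ => Finset.sum_congr rfl fun j _ =>
      Finset.sum_congr rfl fun k _ => Finset.sum_congr rfl fun l _ => ?_
    rw [pairSum p m c halt s t hst i j k l]
  -- count
  have count : (∑ s : Fin (p+2), ∑ t : Fin (p+2), if s = t then (0:ℝ) else C)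
      = (((p:ℝ)+2) * ((p:ℝ)+1)) * C := by
    have h1 : ∀ s : Fin (p+2), (∑ t : Fin (p+2), if s = t then (0:ℝ) else C)
        = ((p:ℝ)+2) * C - C := by
      intro s
      have h2 : ∀ t : Fin (p+2), (if s = t then (0:ℝ) else C) = C - (if s = t then C else 0) := by
        intro t; split <;> ring
      simp only [h2, Finset.sum_sub_distrib, Finset.sum_const, Finset.sum_ite_eq,
        Finset.mem_univ, if_true, card_univ, Fintype.card_fin, nsmul_eq_mul]
      push_cast; ring
    simp only [h1, Finset.sum_const, card_univ, Fintype.card_fin, nsmul_eq_mul]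
    push_cast; ring
  -- Bianchi manipulation
  have hlemB : C = -(1/2) * ∑ i, ∑ j, ∑ k, ∑ l, R i j k l * T i j k l := by
    rw [hC]
    exact lemB m R T hsym2 hbianchi hT1 hT2 hTp
  rw [step1]
  have : ∀ s t : Fin (p+2), (∑ i, ∑ j, ∑ k, ∑ l,
      R i k l j * ∑ K : Fin (p+2) → Fin m,
        (if K s = i then c (update K s j) else 0) * (if K t = k then c (update K t l) else 0))
      = if s = t then (0:ℝ) else C := by
    intro s t
    rcases eq_or_ne s t with h | h
    · subst h; simp only [if_true]; exact hdiag s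
    · rw [if_neg h]; exact hoff s t h
  rw [Finset.sum_congr rfl fun s _ => Finset.sum_congr rfl fun t _ => this s t, count, hlemB]
  ring
end
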